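/- arXiv:2504.15915 — 13 statements merged into one kernel-verified Lean document; each statement's English description precedes it below -/
import Mathlib

section
/- Let (X, {d_r}) satisfy the weak d_r-axioms. For all x, y ∈ X, every r > 0 and every real ε > 0 with d_r(x,y) < ε, there exist r' > 0 and ε' > 0 such that N_{r',ε'}(y) ⊆ N_{r,ε}(x); that is, every z ∈ X with d_{r'}(y,z) < ε' satisfies d_r(x,z) < ε. -/
open ENNReal

/-- The weak `d_r`-axioms for a family of metric-like functions
`d : ℝ → X → X → ℝ≥0∞` indexed by `r > 0`. -/
structure WeakDr {X : Type*} (d : ℝ → X → X → ℝ≥0∞) : Prop where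
  self : ∀ (x : X) (r : ℝ), 0 < r → d r x x = 0
  mono : ∀ (x y : X) (r₁ r₂ : ℝ), 0 < r₁ → r₁ ≤ r₂ → d r₁ x y ≤ d r₂ x y
  usc : ∀ (x y : X) (r ε : ℝ), 0 < r → 0 < ε → d r x y < ENNReal.ofReal ε →
    ∃ δ : ℝ, 0 < δ ∧ d (r + δ) x y < ENNReal.ofReal ε
  weak_tri : ∀ (x y z : X) (r₁ r₂ r₃ : ℝ), 0 < r₁ → 0 < r₂ → 0 < r₃ →
    d (r₁ + r₂) x y < ENNReal.ofReal r₃ → d (r₁ + r₂ + r₃) y z < ENNReal.ofReal r₂ →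
    d r₁ x z ≤ d (r₁ + r₂) x y + d (r₁ + r₂ + r₃) y z

/-- The basic neighborhood `N_{r,ε}(x) = {y | d_r(x,y) < ε}`. -/
def Nbhd {X : Type*} (d : ℝ → X → X → ℝ≥0∞) (r ε : ℝ) (x : X) : Set X :=
  {y | d r x y < ENNReal.ofReal ε}

/-- The collection `ℬ = {N_{r,ε}(x) | x ∈ X, r > 0, ε > 0}`. -/
def drBasis {X : Type*} (d : ℝ → X → X → ℝ≥0∞) : Set (Set X) :=
  {B | ∃ (x : X) (r ε : ℝ), 0 < r ∧ 0 < ε ∧ B = Nbhd d r ε x}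

theorem stmt_0 {X : Type*} (d : ℝ → X → X → ℝ≥0∞) (h : WeakDr d)
    (x y : X) (r ε : ℝ) (hr : 0 < r) (hε : 0 < ε)
    (hxy : d r x y < ENNReal.ofReal ε) :
    ∃ r' ε' : ℝ, 0 < r' ∧ 0 < ε' ∧
      ∀ z : X, d r' y z < ENNReal.ofReal ε' → d r x z < ENNReal.ofReal ε := by
  -- let a = (d r x y).toReal, ε₁ = (a+ε)/2
  have hfin : d r x y ≠ ⊤ := hxy.ne_top
  set a : ℝ := (d r x y).toReal with ha
  have ha0 : 0 ≤ a := ENNReal.toReal_nonneg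
  have haε : a < ε := by
    have := (ENNReal.toReal_lt_toReal hfin (by simp)).mpr hxy
    rwa [ENNReal.toReal_ofReal hε.le] at this
  set ε₁ : ℝ := (a + ε) / 2 with hε₁def
  have hε₁pos : 0 < ε₁ := by positivity
  have hε₁lt : ε₁ < ε := by simp [hε₁def]; linarith
  have hxy₁ : d r x y < ENNReal.ofReal ε₁ := by
    rw [← ENNReal.ofReal_toReal hfin, ← ha]
    exact ENNReal.ofReal_lt_ofReal_iff hε₁pos |>.mpr (by simp [hε₁def]; linarith)
  obtain ⟨δ, hδ, hdδ⟩ := h.usc x y r ε₁ hr hε₁pos hxy₁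
  refine ⟨r + δ + ε₁, min δ (ε - ε₁), by linarith, lt_min hδ (by linarith), fun z hz => ?_⟩
  have hz' : d (r + δ + ε₁) y z < ENNReal.ofReal δ :=
    hz.trans_le (ENNReal.ofReal_le_ofReal (min_le_left _ _))
  have htri := h.weak_tri x y z r δ ε₁ hr hδ hε₁pos hdδ hz'
  calc d r x z ≤ d (r + δ) x y + d (r + δ + ε₁) y z := htri
    _ < ENNReal.ofReal ε₁ + ENNReal.ofReal (ε - ε₁) := by
        refine ENNReal.add_lt_add hdδ ?_
        exact hz.trans_le (ENNReal.ofReal_le_ofReal (min_le_right _ _))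
    _ = ENNReal.ofReal ε := by
        rw [← ENNReal.ofReal_add hε₁pos.le (by linarith)]; ring_nf
end

section
/- Let (X, {d_r}) satisfy the weak d_r-axioms. The collection ℬ = {N_{r,ε}(x) | x ∈ X, r > 0, ε > 0} is a topological basis on X: the union of the sets in ℬ is all of X (indeed x ∈ N_{r,ε}(x) always), and for any B₁, B₂ ∈ ℬ and any y ∈ B₁ ∩ B₂ there exists B₃ ∈ ℬ with y ∈ B₃ ⊆ B₁ ∩ B₂. Consequently ℬ is a basis of the topology it generates. -/
open ENNReal

lemma key {X : Type*} (d : ℝ → X → X → ℝ≥0∞) (h : WeakDr d) (x y : X) (r ε : ℝ)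
    (hr : 0 < r) (hε : 0 < ε) (hy : y ∈ Nbhd d r ε x) :
    ∃ r' ε' : ℝ, 0 < r' ∧ 0 < ε' ∧ Nbhd d r' ε' y ⊆ Nbhd d r ε x := by
  have hy' : d r x y < ENNReal.ofReal ε := hy
  have hfin : d r x y ≠ ⊤ := hy'.ne_top
  set t : ℝ := (d r x y).toReal with ht_def
  have ht0 : 0 ≤ t := ENNReal.toReal_nonneg
  have ht : t < ε := by
    have h1 : (d r x y).toReal < (ENNReal.ofReal ε).toReal :=
      (ENNReal.toReal_lt_toReal hfin ENNReal.ofReal_ne_top).2 hy'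
    rwa [ENNReal.toReal_ofReal hε.le] at h1
  set a : ℝ := (t + ε) / 2 with ha_def
  have ha0 : 0 < a := by positivity
  have hta : t < a := by simp only [ha_def]; linarith
  have haε : a < ε := by simp only [ha_def]; linarith
  have hda : d r x y < ENNReal.ofReal a := by
    rw [← ENNReal.ofReal_toReal hfin]
    exact (ENNReal.ofReal_lt_ofReal_iff ha0).2 hta
  obtain ⟨δ, hδ, hdδ⟩ := h.usc x y r a hr ha0 hda
  refine ⟨r + δ + a, min δ (ε - a), by linarith, by
    simp only [lt_min_iff]; constructor <;> linarith, ?_⟩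
  intro z hz
  have hz' : d (r + δ + a) y z < ENNReal.ofReal (min δ (ε - a)) := hz
  have h2 : d (r + δ + a) y z < ENNReal.ofReal δ :=
    hz'.trans_le (ENNReal.ofReal_le_ofReal (min_le_left _ _))
  have h3 : d (r + δ + a) y z < ENNReal.ofReal (ε - a) :=
    hz'.trans_le (ENNReal.ofReal_le_ofReal (min_le_right _ _))
  have htri := h.weak_tri x y z r δ a hr hδ ha0 hdδ h2
  refine lt_of_le_of_lt htri ?_
  calc d (r + δ) x y + d (r + δ + a) y z
      < ENNReal.ofReal a + ENNReal.ofReal (ε - a) := ENNReal.add_lt_add hdδ h3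
    _ = ENNReal.ofReal ε := by
        rw [← ENNReal.ofReal_add ha0.le (by linarith)]; ring_nf

theorem stmt_1 {X : Type*} (d : ℝ → X → X → ℝ≥0∞) (h : WeakDr d) :
    (∀ (x : X) (r ε : ℝ), 0 < r → 0 < ε → x ∈ Nbhd d r ε x) ∧
    @TopologicalSpace.IsTopologicalBasis X
      (TopologicalSpace.generateFrom (drBasis d)) (drBasis d) := by
  have mem_self : ∀ (x : X) (r ε : ℝ), 0 < r → 0 < ε → x ∈ Nbhd d r ε x := by
    intro x r ε hr hε
    show d r x x < ENNReal.ofReal ε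
    rw [h.self x r hr]
    simpa using hε
  refine ⟨mem_self, ?_⟩
  letI : TopologicalSpace X := TopologicalSpace.generateFrom (drBasis d)
  refine ⟨?_, ?_, rfl⟩
  · rintro t₁ ⟨x₁, r₁, ε₁, hr₁, hε₁, rfl⟩ t₂ ⟨x₂, r₂, ε₂, hr₂, hε₂, rfl⟩ y hy
    obtain ⟨r₁', ε₁', hr₁', hε₁', hsub₁⟩ := key d h x₁ y r₁ ε₁ hr₁ hε₁ hy.1
    obtain ⟨r₂', ε₂', hr₂', hε₂', hsub₂⟩ := key d h x₂ y r₂ ε₂ hr₂ hε₂ hy.2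
    refine ⟨Nbhd d (max r₁' r₂') (min ε₁' ε₂') y,
      ⟨y, max r₁' r₂', min ε₁' ε₂', lt_max_of_lt_left hr₁', lt_min hε₁' hε₂', rfl⟩,
      mem_self y _ _ (lt_max_of_lt_left hr₁') (lt_min hε₁' hε₂'), ?_⟩
    intro z hz
    have hz' : d (max r₁' r₂') y z < ENNReal.ofReal (min ε₁' ε₂') := hz
    constructor
    · exact hsub₁ <| lt_of_le_of_lt (h.mono y z r₁' _ hr₁' (le_max_left _ _))
        (hz'.trans_le (ENNReal.ofReal_le_ofReal (min_le_left _ _)))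
    · exact hsub₂ <| lt_of_le_of_lt (h.mono y z r₂' _ hr₂' (le_max_right _ _))
        (hz'.trans_le (ENNReal.ofReal_le_ofReal (min_le_right _ _)))
  · ext x
    simp only [Set.mem_sUnion, Set.mem_univ, iff_true]
    exact ⟨Nbhd d 1 1 x, ⟨x, 1, 1, one_pos, one_pos, rfl⟩, mem_self x 1 1 one_pos one_pos⟩
end

section
/- Let (X, {d_r}) satisfy the weak d_r-axioms, and equip X with the topology generated by the collection {N_{r,ε}(x) | x ∈ X, r > 0, ε > 0}. Then for every x ∈ X and every r > 0, the function X → [0,∞], y ↦ d_r(x,y), is upper semicontinuous (i.e., for every b, the set {y | d_r(x,y) < b} is open). -/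
open ENNReal

namespace WeakDr

variable {X : Type*} {d : ℝ → X → X → ℝ≥0∞}

theorem mem_nbhd_self (h : WeakDr d) (y : X) {r ε : ℝ} (hr : 0 < r) (hε : 0 < ε) :
    y ∈ Nbhd d r ε y := by
  rw [Nbhd, Set.mem_ofPred_eq, h.self y r hr]
  exact ENNReal.ofReal_pos.2 hε

theorem nbhd_subset_lt_add (h : WeakDr d) {x y : X} {r α ρ : ℝ} (hr : 0 < r) (hα : 0 < α)
    (hρ : 0 < ρ) (hxy : d (r + ρ) x y < ENNReal.ofReal α) :
    Nbhd d (r + ρ + α) ρ y ⊆ {z | d r x z < ENNReal.ofReal α + ENNReal.ofReal ρ} := fun z hyz =>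
  calc d r x z ≤ d (r + ρ) x y + d (r + ρ + α) y z := h.weak_tri x y z r ρ α hr hρ hα hxy hyz
    _ < ENNReal.ofReal α + ENNReal.ofReal ρ := ENNReal.add_lt_add hxy hyz

theorem exists_lt_ofReal_add_le_of_lt (h : WeakDr d) {x y : X} {r : ℝ} (hr : 0 < r) {b : ℝ≥0∞}
    (hb : d r x y < b) :
    ∃ α ρ : ℝ, 0 < α ∧ 0 < ρ ∧ d (r + ρ) x y < ENNReal.ofReal α ∧
      ENNReal.ofReal α + ENNReal.ofReal ρ ≤ b := by
  obtain ⟨α, -, hxyα, hαb⟩ := ENNReal.lt_iff_exists_real_btwn.1 hb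
  have hα : 0 < α := ENNReal.ofReal_pos.1 (hxyα.trans_le' bot_le)
  obtain ⟨δ, hδ, hδα⟩ := h.usc x y r α hr hα hxyα
  obtain ⟨ε, hε, hεb⟩ := ENNReal.lt_iff_exists_add_pos_lt.1 hαb
  refine ⟨α, min δ ε, hα, lt_min hδ hε, ?_, ?_⟩
  · exact (h.mono x y _ _ (by positivity) (by simp)).trans_lt hδα
  · calc ENNReal.ofReal α + ENNReal.ofReal (min δ ε)
        ≤ ENNReal.ofReal α + ε := by
          gcongr
          exact (ENNReal.ofReal_le_ofReal (min_le_right _ _)).trans_eq ENNReal.ofReal_coe_nnreal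
      _ ≤ b := hεb.le

end WeakDr

theorem stmt_2 {X : Type*} (d : ℝ → X → X → ℝ≥0∞) (h : WeakDr d)
    (x : X) (r : ℝ) (hr : 0 < r) :
    ∀ b : ℝ≥0∞,
      @IsOpen X (TopologicalSpace.generateFrom (drBasis d)) {y | d r x y < b} := by
  intro b
  let _ : TopologicalSpace X := TopologicalSpace.generateFrom (drBasis d)
  refine isOpen_iff_forall_mem_open.2 fun y hy => ?_
  obtain ⟨α, ρ, hα, hρ, hxy, hαρb⟩ := h.exists_lt_ofReal_add_le_of_lt hr hy
  refine ⟨Nbhd d (r + ρ + α) ρ y, fun z hz => ?_, ?_, h.mem_nbhd_self y (by positivity) hρ⟩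
  · exact (h.nbhd_subset_lt_add hr hα hρ hxy hz).trans_le hαρb
  · exact TopologicalSpace.isOpen_generateFrom_of_mem ⟨y, _, ρ, by positivity, hρ, rfl⟩
end

section
/- Let (T, d_T) be a proper metric space with a fixed basepoint t₀, let (S, d_S) be a metric space, and let X = C(T,S) with d_r(f,g) = sup_{x ∈ B̄(t₀,r)} edist(f(x), g(x)). Then the family {d_r}_{r>0} satisfies the weak d_r-axioms: d_r(f,f) = 0 for all r > 0; 0 < r₁ ≤ r₂ implies d_{r₁}(f,g) ≤ d_{r₂}(f,g); for all r > 0 and real ε > 0, if d_r(f,g) < ε then there exists δ > 0 with d_{r+δ}(f,g) < ε; and for all r₁, r₂, r₃ > 0, if d_{r₁+r₂}(f,g) < r₃ and d_{r₁+r₂+r₃}(g,h) < r₂ then d_{r₁}(f,h) ≤ d_{r₁+r₂}(f,g) + d_{r₁+r₂+r₃}(g,h). -/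
open ENNReal

/-- `d_r(f,g) = sup_{x ∈ closedBall t₀ r} edist (f x) (g x)` on `C(T,S)`. -/
noncomputable def mapDr {T S : Type*} [MetricSpace T] [MetricSpace S] (t₀ : T)
    (r : ℝ) (f g : C(T, S)) : ℝ≥0∞ :=
  ⨆ x ∈ Metric.closedBall t₀ r, edist (f x) (g x)

private lemma sup_lt_of_compact {T : Type*} [MetricSpace T] {K : Set T}
    (hK : IsCompact K) (hne : K.Nonempty) {φ : T → ℝ≥0∞} (hφ : Continuous φ)
    {ε : ℝ≥0∞} (h : ∀ x ∈ K, φ x < ε) : (⨆ x ∈ K, φ x) < ε := by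
  obtain ⟨x₀, hx₀, hmax⟩ := hK.exists_isMaxOn hne hφ.continuousOn
  exact lt_of_le_of_lt (iSup₂_le fun x hx => hmax hx) (h x₀ hx₀)

theorem stmt_3 {T S : Type*} [MetricSpace T] [ProperSpace T] [MetricSpace S] (t₀ : T) :
    WeakDr (mapDr (T := T) (S := S) t₀) := by
  constructor
  · intro f r _
    simp [mapDr]
  · intro f g r₁ r₂ _ hle
    exact biSup_mono (Metric.closedBall_subset_closedBall hle)
  · intro f g r ε hr hε hlt
    set φ : T → ℝ≥0∞ := fun x => edist (f x) (g x) with hφdef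
    have hφ : Continuous φ := f.continuous.edist g.continuous
    have hU : IsOpen {x | φ x < ENNReal.ofReal ε} := isOpen_lt hφ continuous_const
    have hball : Metric.closedBall t₀ r ⊆ {x | φ x < ENNReal.ofReal ε} := by
      intro x hx
      exact lt_of_le_of_lt (le_biSup φ hx) hlt
    set C : Set T := Metric.closedBall t₀ (r + 1) \ {x | φ x < ENNReal.ofReal ε} with hC
    have hCcomp : IsCompact C := (isCompact_closedBall t₀ (r + 1)).diff hU
    rcases C.eq_empty_or_nonempty with hCe | hCne
    · refine ⟨1, one_pos, ?_⟩
      refine sup_lt_of_compact (isCompact_closedBall t₀ (r + 1))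
        ⟨t₀, Metric.mem_closedBall_self (by linarith)⟩ hφ ?_
      intro x hx
      by_contra hcon
      exact (Set.eq_empty_iff_forall_notMem.mp hCe x) ⟨hx, hcon⟩
    · obtain ⟨c, hc, hmin⟩ := hCcomp.exists_isMinOn (f := fun x => dist t₀ x) hCne
        (continuous_const.dist continuous_id).continuousOn
      have hcr : r < dist t₀ c := by
        by_contra hcon
        push_neg at hcon
        have : c ∈ Metric.closedBall t₀ r := by
          rw [Metric.mem_closedBall, dist_comm]; exact hcon
        exact hc.2 (hball this)
      refine ⟨min ((dist t₀ c - r) / 2) 1, lt_min (by linarith) one_pos, ?_⟩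
      have hδ1 : min ((dist t₀ c - r) / 2) 1 ≤ 1 := min_le_right _ _
      refine sup_lt_of_compact (isCompact_closedBall t₀ _)
        ⟨t₀, Metric.mem_closedBall_self (by have := lt_min (show (0:ℝ) < (dist t₀ c - r)/2 by linarith) one_pos; linarith)⟩ hφ ?_
      intro x hx
      by_contra hcon
      have hxC : x ∈ C := by
        constructor
        · rw [Metric.mem_closedBall] at hx ⊢
          linarith
        · exact hcon
      have h1 : dist t₀ c ≤ dist t₀ x := hmin hxC
      have h2 : dist t₀ x ≤ r + (dist t₀ c - r) / 2 := by
        rw [Metric.mem_closedBall] at hx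
        rw [dist_comm]
        exact hx.trans (by linarith [min_le_left ((dist t₀ c - r) / 2) (1:ℝ)])
      linarith
  · intro f g h r₁ r₂ r₃ hr₁ hr₂ hr₃ _ _
    simp only [mapDr]
    refine iSup₂_le fun x hx => ?_
    have hx1 : x ∈ Metric.closedBall t₀ (r₁ + r₂) :=
      Metric.closedBall_subset_closedBall (by linarith) hx
    have hx2 : x ∈ Metric.closedBall t₀ (r₁ + r₂ + r₃) :=
      Metric.closedBall_subset_closedBall (by linarith) hx
    calc edist (f x) (h x) ≤ edist (f x) (g x) + edist (g x) (h x) := edist_triangle _ _ _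
      _ ≤ (⨆ t ∈ Metric.closedBall t₀ (r₁ + r₂), edist (f t) (g t)) +
          ⨆ t ∈ Metric.closedBall t₀ (r₁ + r₂ + r₃), edist (g t) (h t) :=
        add_le_add (le_biSup (fun t => edist (f t) (g t)) hx1)
          (le_biSup (fun t => edist (g t) (h t)) hx2)
end

section
/- Let 𝒫 be a finite set of subsets of ℝ^d and let T₁, T₂, T₃ be tilings of ℝ^d with prototile set 𝒫. For all r₁, r₂, r₃ > 0: if d_{r₁+r₂}(T₁,T₂) < r₃ and d_{r₁+r₂+r₃}(T₂,T₃) < r₂, then d_{r₁}(T₁,T₃) ≤ d_{r₁+r₂}(T₁,T₂) + d_{r₁+r₂+r₃}(T₂,T₃). -/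
open ENNReal

noncomputable section

/-- Translation of a tiling: `T + u = {t + u | t ∈ T}`. -/
def transTiling {d : ℕ} (T : Set (Set (EuclideanSpace ℝ (Fin d))))
    (u : EuclideanSpace ℝ (Fin d)) : Set (Set (EuclideanSpace ℝ (Fin d))) :=
  (fun s => (fun p => p + u) '' s) '' T

/-- `T ⊓ A = {t ∈ T | t ∩ A ≠ ∅}`, the tiles of `T` meeting `A`. -/
def meetsTiles {d : ℕ} (T : Set (Set (EuclideanSpace ℝ (Fin d))))
    (A : Set (EuclideanSpace ℝ (Fin d))) : Set (Set (EuclideanSpace ℝ (Fin d))) :=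
  {t ∈ T | (t ∩ A).Nonempty}

/-- `T` is a tiling of `ℝ^d` with prototile set `P`. -/
def IsTiling {d : ℕ} (P : Set (Set (EuclideanSpace ℝ (Fin d))))
    (T : Set (Set (EuclideanSpace ℝ (Fin d)))) : Prop :=
  (∀ t ∈ T, ∃ τ ∈ P, ∃ x : EuclideanSpace ℝ (Fin d), t = (fun p => p + x) '' τ) ∧
  (∀ t ∈ T, Nonempty
    (t ≃ₜ (Metric.closedBall (0 : EuclideanSpace ℝ (Fin d)) 1 : Set (EuclideanSpace ℝ (Fin d))))) ∧
  (⋃₀ T = Set.univ) ∧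
  (∀ t₁ ∈ T, ∀ t₂ ∈ T, t₁ ≠ t₂ → interior t₁ ∩ interior t₂ = ∅)

/-- `d_r(T₁,T₂)`: the infimum of all `ε > 0` such that some `u` with `‖u‖ < ε` satisfies
`(T₁+u) ⊓ B̄_r = T₂ ⊓ B̄_r`, taken in `[0,∞]` (so `= ∞` if there is no such `ε`). -/
def tilingDr {d : ℕ} (r : ℝ) (T₁ T₂ : Set (Set (EuclideanSpace ℝ (Fin d)))) : ℝ≥0∞ :=
  ⨅ (ε : ℝ) (_ : 0 < ε ∧ ∃ u : EuclideanSpace ℝ (Fin d), ‖u‖ < ε ∧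
      meetsTiles (transTiling T₁ u) (Metric.closedBall 0 r)
        = meetsTiles T₂ (Metric.closedBall 0 r)),
    ENNReal.ofReal ε

lemma image_add_add {d : ℕ} (s : Set (EuclideanSpace ℝ (Fin d)))
    (u v : EuclideanSpace ℝ (Fin d)) :
    (fun p => p + v) '' ((fun p => p + u) '' s) = (fun p => p + (u + v)) '' s := by
  rw [Set.image_image]
  simp [add_assoc]

lemma key_glue {d : ℕ} (T₁ T₂ T₃ : Set (Set (EuclideanSpace ℝ (Fin d))))
    (r₁ r₂ r₃ : ℝ) (hr₁ : 0 < r₁) (hr₂ : 0 < r₂) (hr₃ : 0 < r₃)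
    (u v : EuclideanSpace ℝ (Fin d)) (hv : ‖v‖ < r₂)
    (H1 : meetsTiles (transTiling T₁ u) (Metric.closedBall 0 (r₁ + r₂))
        = meetsTiles T₂ (Metric.closedBall 0 (r₁ + r₂)))
    (H2 : meetsTiles (transTiling T₂ v) (Metric.closedBall 0 (r₁ + r₂ + r₃))
        = meetsTiles T₃ (Metric.closedBall 0 (r₁ + r₂ + r₃))) :
    meetsTiles (transTiling T₁ (u + v)) (Metric.closedBall 0 r₁)
        = meetsTiles T₃ (Metric.closedBall 0 r₁) := by
  have hball : (Metric.closedBall (0 : EuclideanSpace ℝ (Fin d)) r₁)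
      ⊆ Metric.closedBall 0 (r₁ + r₂ + r₃) :=
    Metric.closedBall_subset_closedBall (by linarith)
  ext t
  constructor
  · rintro ⟨⟨s, hs, rfl⟩, p, hp, hpball⟩
    -- p ∈ (·+(u+v))'' s, ‖p‖ ≤ r₁
    have hpn : ‖p‖ ≤ r₁ := by simpa using hpball
    -- the intermediate tile
    have hmid : (fun q => q + u) '' s ∈ meetsTiles (transTiling T₁ u)
        (Metric.closedBall 0 (r₁ + r₂)) := by
      obtain ⟨q, hq, rfl⟩ := hp
      refine ⟨⟨s, hs, rfl⟩, q + u, ⟨q, hq, rfl⟩, ?_⟩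
      have : q + u = (q + (u + v)) - v := by abel
      rw [this]
      have := norm_sub_le (q + (u + v)) v
      simp only [Metric.mem_closedBall, dist_zero_right]
      linarith
    rw [H1] at hmid
    have ht3 : (fun p => p + (u + v)) '' s ∈ meetsTiles (transTiling T₂ v)
        (Metric.closedBall 0 (r₁ + r₂ + r₃)) := by
      refine ⟨⟨(fun q => q + u) '' s, hmid.1, image_add_add s u v⟩, p, hp, hball hpball⟩
    rw [H2] at ht3
    exact ⟨ht3.1, p, hp, hpball⟩
  · rintro ⟨ht, p, hp, hpball⟩
    have hpn : ‖p‖ ≤ r₁ := by simpa using hpball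
    have ht3 : t ∈ meetsTiles (transTiling T₂ v) (Metric.closedBall 0 (r₁ + r₂ + r₃)) := by
      rw [H2]; exact ⟨ht, p, hp, hball hpball⟩
    obtain ⟨⟨s', hs', rfl⟩, _⟩ := ht3
    -- p ∈ (·+v)'' s', so p - v ∈ s'
    obtain ⟨q, hq, rfl⟩ := hp
    have hmid : s' ∈ meetsTiles T₂ (Metric.closedBall 0 (r₁ + r₂)) := by
      refine ⟨hs', q, hq, ?_⟩
      have : ‖q‖ ≤ ‖q + v‖ + ‖v‖ := by
        have := norm_sub_le (q + v) v
        simpa using this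
      simp only [Metric.mem_closedBall, dist_zero_right]
      linarith
    rw [← H1] at hmid
    obtain ⟨⟨s, hs, rfl⟩, _⟩ := hmid
    refine ⟨⟨s, hs, (image_add_add s u v).symm⟩, q + v, ⟨q, hq, rfl⟩, hpball⟩

theorem stmt_5 {d : ℕ} (hd : 1 ≤ d) (P : Set (Set (EuclideanSpace ℝ (Fin d))))
    (hP : P.Finite)
    (T₁ T₂ T₃ : Set (Set (EuclideanSpace ℝ (Fin d))))
    (h₁ : IsTiling P T₁) (h₂ : IsTiling P T₂) (h₃ : IsTiling P T₃)
    (r₁ r₂ r₃ : ℝ) (hr₁ : 0 < r₁) (hr₂ : 0 < r₂) (hr₃ : 0 < r₃)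
    (h12 : tilingDr (r₁ + r₂) T₁ T₂ < ENNReal.ofReal r₃)
    (h23 : tilingDr (r₁ + r₂ + r₃) T₂ T₃ < ENNReal.ofReal r₂) :
    tilingDr r₁ T₁ T₃ ≤ tilingDr (r₁ + r₂) T₁ T₂ + tilingDr (r₁ + r₂ + r₃) T₂ T₃ := by
  set a := tilingDr (r₁ + r₂) T₁ T₂ with ha
  set b := tilingDr (r₁ + r₂ + r₃) T₂ T₃ with hb
  have hafin : a < ⊤ := h12.trans_le le_top
  have hbfin : b < ⊤ := h23.trans_le le_top
  refine ENNReal.le_of_forall_pos_le_add fun η hη _ => ?_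
  have hη2 : (0 : ℝ≥0∞) < (η : ℝ≥0∞) / 2 := by
    simp [ENNReal.div_pos_iff, hη.ne']
  -- choose ε₁
  have h1' : a < a + (η : ℝ≥0∞) / 2 :=
    ENNReal.lt_add_right hafin.ne hη2.ne'
  rw [ha, tilingDr, iInf_lt_iff] at h1'
  obtain ⟨ε₁, h1''⟩ := h1'
  rw [iInf_lt_iff] at h1''
  obtain ⟨⟨hε₁pos, u, hu, H1⟩, hε₁lt⟩ := h1''
  -- choose ε₂, small enough and < r₂
  have h2' : b < min (b + (η : ℝ≥0∞) / 2) (ENNReal.ofReal r₂) :=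
    lt_min (ENNReal.lt_add_right hbfin.ne hη2.ne') h23
  rw [hb, tilingDr, iInf_lt_iff] at h2'
  obtain ⟨ε₂, h2''⟩ := h2'
  rw [iInf_lt_iff] at h2''
  obtain ⟨⟨hε₂pos, v, hv, H2⟩, hε₂lt⟩ := h2''
  have hε₂r₂ : ε₂ < r₂ := by
    by_contra h
    push_neg at h
    exact absurd (ENNReal.ofReal_le_ofReal h) (not_le.2 ((lt_min_iff.1 hε₂lt).2))
  have hvr₂ : ‖v‖ < r₂ := hv.trans hε₂r₂
  -- the combined witness
  have hkey := key_glue T₁ T₂ T₃ r₁ r₂ r₃ hr₁ hr₂ hr₃ u v hvr₂ H1 H2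
  have hle : tilingDr r₁ T₁ T₃ ≤ ENNReal.ofReal (ε₁ + ε₂) := by
    refine iInf₂_le (ε₁ + ε₂) ⟨by linarith, u + v, ?_, hkey⟩
    calc ‖u + v‖ ≤ ‖u‖ + ‖v‖ := norm_add_le u v
      _ < ε₁ + ε₂ := by linarith
  refine hle.trans ?_
  rw [ENNReal.ofReal_add hε₁pos.le hε₂pos.le]
  calc ENNReal.ofReal ε₁ + ENNReal.ofReal ε₂
      ≤ (a + (η : ℝ≥0∞) / 2) + (b + (η : ℝ≥0∞) / 2) :=
        add_le_add hε₁lt.le ((lt_min_iff.1 hε₂lt).1).le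
    _ = a + b + η := by
        rw [add_add_add_comm, ENNReal.add_halves]
end
end

section
/- Let 𝒫 be a finite set of subsets of ℝ^d and let T₁ be a tiling of ℝ^d with prototile set 𝒫. (i) For every real ε with 0 < ε < 1/√2 there exist r' > 0 and ε' > 0 such that every tiling T' with prototile set 𝒫 satisfying d_{r'}(T₁,T') < ε' also satisfies d(T₁,T') < ε. (ii) For every r > 0 and every real ε > 0 there exists ε' > 0 such that every tiling T' with prototile set 𝒫 satisfying d(T₁,T') < ε' also satisfies d_r(T₁,T') < ε. Consequently, on any set of tilings of ℝ^d with prototile set 𝒫, the families {N_{r,ε}(T)} (for d_r) and the d-balls are equivalent neighborhood bases at every point. -/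
open ENNReal

noncomputable section

/-- The Sadun tiling metric `d(T,T') = inf({1/√2} ∪ {ε > 0 | ∃ u v, |u|,|v| < ε and
`(T+u) ⊓ B(0,1/ε) = (T'+v) ⊓ B(0,1/ε)`})`. -/
def tilingMetric {d : ℕ} (T T' : Set (Set (EuclideanSpace ℝ (Fin d)))) : ℝ :=
  sInf ({1 / Real.sqrt 2} ∪
    {ε : ℝ | 0 < ε ∧ ∃ u v : EuclideanSpace ℝ (Fin d), ‖u‖ < ε ∧ ‖v‖ < ε ∧
      meetsTiles (transTiling T u) (Metric.ball 0 (1 / ε))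
        = meetsTiles (transTiling T' v) (Metric.ball 0 (1 / ε))})

/-!
Both directions only compare the two ways of matching patterns. If `T₁ + u` and `T'` agree on
`B̄_{2/ε}` with `‖u‖ < ε/2`, then they agree on the open ball `B(0, 2/ε)`, so `(u, 0)` witnesses
`d(T₁, T') ≤ ε/2`. Conversely, if `T₁ + u` and `T' + v` agree on `B(0, 1/s)` with `‖u‖, ‖v‖ < s`
and `s` is small against `1/r`, translating back by `v` shows that `T₁ + (u - v)` and `T'` agree
on `B̄_r`, whence `d_r(T₁, T') ≤ 2s`.
-/

open ENNReal Metric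

section Patterns

variable {d : ℕ} {S S' : Set (Set (EuclideanSpace ℝ (Fin d)))}

lemma meetsTiles_eq_of_subset {A B : Set (EuclideanSpace ℝ (Fin d))} (hAB : A ⊆ B)
    (h : meetsTiles S B = meetsTiles S' B) : meetsTiles S A = meetsTiles S' A := by
  ext t
  have key : ∀ {X Y : Set (Set (EuclideanSpace ℝ (Fin d)))},
      meetsTiles X B = meetsTiles Y B → t ∈ meetsTiles X A → t ∈ meetsTiles Y A :=
    fun hXY ⟨ht, x, hxt, hxA⟩ => ⟨(hXY ▸ ⟨ht, x, hxt, hAB hxA⟩ : t ∈ meetsTiles _ B).1, x, hxt, hxA⟩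
  exact ⟨key h, key h.symm⟩

lemma transTiling_transTiling (S : Set (Set (EuclideanSpace ℝ (Fin d))))
    (a b : EuclideanSpace ℝ (Fin d)) :
    transTiling (transTiling S a) b = transTiling S (a + b) := by
  simp only [transTiling, Set.image_image, add_assoc]

lemma transTiling_zero (S : Set (Set (EuclideanSpace ℝ (Fin d)))) : transTiling S 0 = S := by
  simp [transTiling]

lemma transTiling_injective (v : EuclideanSpace ℝ (Fin d)) :
    Function.Injective fun S : Set (Set (EuclideanSpace ℝ (Fin d))) => transTiling S v := by
  intro S S' h
  simpa [transTiling_transTiling, transTiling_zero] using congrArg (transTiling · (-v)) h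

lemma meetsTiles_transTiling_image (S : Set (Set (EuclideanSpace ℝ (Fin d))))
    (v : EuclideanSpace ℝ (Fin d)) (B : Set (EuclideanSpace ℝ (Fin d))) :
    meetsTiles (transTiling S v) ((· + v) '' B) = transTiling (meetsTiles S B) v := by
  ext t
  simp only [meetsTiles, transTiling, Set.mem_image, Set.mem_sep_iff]
  constructor
  · rintro ⟨⟨s, hs, rfl⟩, _, ⟨a, ha, rfl⟩, b, hb, hab⟩
    exact ⟨s, ⟨hs, b, add_right_cancel hab ▸ ha, hb⟩, rfl⟩
  · rintro ⟨s, ⟨hs, x, hxs, hxB⟩, rfl⟩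
    exact ⟨⟨s, hs, rfl⟩, x + v, ⟨x, hxs, rfl⟩, ⟨x, hxB, rfl⟩⟩

/-- Undoing the translation by `v` on both sides moves the agreement region `B(0, R)` to
`B(-v, R)`, which still contains `B̄_r`. -/
lemma meetsTiles_closedBall_eq_of_ball_eq {u v : EuclideanSpace ℝ (Fin d)} {r R : ℝ}
    (h : meetsTiles (transTiling S u) (ball 0 R) = meetsTiles (transTiling S' v) (ball 0 R))
    (hrR : r + ‖v‖ < R) :
    meetsTiles (transTiling S (u - v)) (closedBall 0 r) = meetsTiles S' (closedBall 0 r) := by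
  have hsub : (· + v) '' closedBall (0 : EuclideanSpace ℝ (Fin d)) r ⊆ ball 0 R := by
    rintro _ ⟨p, hp, rfl⟩
    rw [mem_closedBall_zero_iff] at hp
    rw [mem_ball_zero_iff]
    linarith [norm_add_le p v]
  have h' := meetsTiles_eq_of_subset hsub h
  rw [← sub_add_cancel u v, ← transTiling_transTiling, meetsTiles_transTiling_image,
    meetsTiles_transTiling_image] at h'
  exact transTiling_injective v h'

end Patterns

section Distances

variable {d : ℕ} {T T' : Set (Set (EuclideanSpace ℝ (Fin d)))}

lemma exists_of_tilingDr_lt {r δ : ℝ} (h : tilingDr r T T' < ENNReal.ofReal δ) :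
    ∃ u : EuclideanSpace ℝ (Fin d), ‖u‖ < δ ∧
      meetsTiles (transTiling T u) (closedBall 0 r) = meetsTiles T' (closedBall 0 r) := by
  obtain ⟨ε, h⟩ := iInf_lt_iff.mp h
  obtain ⟨⟨-, u, hu, heq⟩, hεδ⟩ := iInf_lt_iff.mp h
  exact ⟨u, hu.trans (ENNReal.ofReal_lt_ofReal_iff'.mp hεδ).1, heq⟩

lemma tilingDr_le_ofReal {r ε : ℝ} {u : EuclideanSpace ℝ (Fin d)} (hu : ‖u‖ < ε)
    (h : meetsTiles (transTiling T u) (closedBall 0 r) = meetsTiles T' (closedBall 0 r)) :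
    tilingDr r T T' ≤ ENNReal.ofReal ε :=
  iInf₂_le ε ⟨(norm_nonneg u).trans_lt hu, u, hu, h⟩

lemma tilingMetric_le {ε : ℝ} {u v : EuclideanSpace ℝ (Fin d)} (hu : ‖u‖ < ε) (hv : ‖v‖ < ε)
    (h : meetsTiles (transTiling T u) (ball 0 (1 / ε))
      = meetsTiles (transTiling T' v) (ball 0 (1 / ε))) :
    tilingMetric T T' ≤ ε := by
  have hbdd : BddBelow ({1 / √2} ∪ {ε : ℝ | 0 < ε ∧ ∃ u v : EuclideanSpace ℝ (Fin d),
      ‖u‖ < ε ∧ ‖v‖ < ε ∧ meetsTiles (transTiling T u) (ball 0 (1 / ε))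
        = meetsTiles (transTiling T' v) (ball 0 (1 / ε))}) := by
    refine ⟨0, ?_⟩
    rintro x (rfl | ⟨hx, -⟩)
    exacts [by positivity, hx.le]
  exact csInf_le hbdd (Or.inr ⟨(norm_nonneg u).trans_lt hu, u, v, hu, hv, h⟩)

/-- Below `1/√2` the cap `1/√2` in the infimum cannot be the witness, so a pattern match is. -/
lemma exists_of_tilingMetric_lt {δ : ℝ} (hδ : δ ≤ 1 / √2) (h : tilingMetric T T' < δ) :
    ∃ s, 0 < s ∧ s < δ ∧ ∃ u v : EuclideanSpace ℝ (Fin d), ‖u‖ < s ∧ ‖v‖ < s ∧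
      meetsTiles (transTiling T u) (ball 0 (1 / s))
        = meetsTiles (transTiling T' v) (ball 0 (1 / s)) := by
  obtain ⟨s, hs | hs, hsδ⟩ := exists_lt_of_csInf_lt ⟨1 / √2, Or.inl rfl⟩ h
  · exact absurd (hs ▸ hsδ) hδ.not_gt
  · exact ⟨s, hs.1, hsδ, hs.2⟩

lemma tilingMetric_le_of_tilingDr_lt {ε : ℝ} (h : tilingDr (1 / ε) T T' < ENNReal.ofReal ε) :
    tilingMetric T T' ≤ ε := by
  obtain ⟨u, hu, heq⟩ := exists_of_tilingDr_lt h
  refine tilingMetric_le (v := 0) hu (by simpa using (norm_nonneg u).trans_lt hu) ?_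
  rw [transTiling_zero]
  exact meetsTiles_eq_of_subset ball_subset_closedBall heq

lemma tilingDr_lt_of_tilingMetric_lt {r ε : ℝ} (hr : 0 ≤ r)
    (h : tilingMetric T T' < min (ε / 2) (1 / (r + 2))) :
    tilingDr r T T' < ENNReal.ofReal ε := by
  have hsqrt : √2 ≤ r + 2 := Real.sqrt_le_iff.mpr ⟨by linarith, by nlinarith⟩
  obtain ⟨s, hs, hsδ, u, v, hu, hv, heq⟩ := exists_of_tilingMetric_lt
    ((min_le_right _ _).trans (one_div_le_one_div_of_le (by positivity) hsqrt)) h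
  have hsr : r + 2 < 1 / s := (lt_one_div (by positivity) hs).mpr (hsδ.trans_le (min_le_right _ _))
  have hs2 : s < 1 / 2 := (hsδ.trans_le (min_le_right _ _)).trans_le
    (one_div_le_one_div_of_le two_pos (by linarith))
  have hsε : s < ε / 2 := hsδ.trans_le (min_le_left _ _)
  calc tilingDr r T T' ≤ ENNReal.ofReal (2 * s) :=
        tilingDr_le_ofReal (by linarith [norm_sub_le u v])
          (meetsTiles_closedBall_eq_of_ball_eq heq (by linarith))
    _ < ENNReal.ofReal ε := (ENNReal.ofReal_lt_ofReal_iff (by linarith)).mpr (by linarith)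

end Distances

theorem stmt_7_general {d : ℕ} (P : Set (Set (EuclideanSpace ℝ (Fin d))))
    (T₁ : Set (Set (EuclideanSpace ℝ (Fin d)))) :
    (∀ ε : ℝ, 0 < ε → ε < 1 / Real.sqrt 2 →
      ∃ r' ε' : ℝ, 0 < r' ∧ 0 < ε' ∧
        ∀ T' : Set (Set (EuclideanSpace ℝ (Fin d))), IsTiling P T' →
          tilingDr r' T₁ T' < ENNReal.ofReal ε' → tilingMetric T₁ T' < ε) ∧
    (∀ r ε : ℝ, 0 < r → 0 < ε →
      ∃ ε' : ℝ, 0 < ε' ∧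
        ∀ T' : Set (Set (EuclideanSpace ℝ (Fin d))), IsTiling P T' →
          tilingMetric T₁ T' < ε' → tilingDr r T₁ T' < ENNReal.ofReal ε) := by
  constructor
  · intro ε hε _
    refine ⟨1 / (ε / 2), ε / 2, by positivity, by positivity, fun T' _ h => ?_⟩
    linarith [tilingMetric_le_of_tilingDr_lt h]
  · intro r ε hr hε
    exact ⟨min (ε / 2) (1 / (r + 2)), by positivity,
      fun T' _ => tilingDr_lt_of_tilingMetric_lt hr.le⟩

theorem stmt_7 {d : ℕ} (hd : 1 ≤ d) (P : Set (Set (EuclideanSpace ℝ (Fin d))))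
    (hP : P.Finite)
    (T₁ : Set (Set (EuclideanSpace ℝ (Fin d)))) (h₁ : IsTiling P T₁) :
    (∀ ε : ℝ, 0 < ε → ε < 1 / Real.sqrt 2 →
      ∃ r' ε' : ℝ, 0 < r' ∧ 0 < ε' ∧
        ∀ T' : Set (Set (EuclideanSpace ℝ (Fin d))), IsTiling P T' →
          tilingDr r' T₁ T' < ENNReal.ofReal ε' → tilingMetric T₁ T' < ε) ∧
    (∀ r ε : ℝ, 0 < r → 0 < ε →
      ∃ ε' : ℝ, 0 < ε' ∧
        ∀ T' : Set (Set (EuclideanSpace ℝ (Fin d))), IsTiling P T' →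
          tilingMetric T₁ T' < ε' → tilingDr r T₁ T' < ENNReal.ofReal ε) :=
  stmt_7_general P T₁
end
end

section
/- Let (X, {d_r}) satisfy the weaker d_r-axioms. For every r > 0 and every real ε > 0, set ε' = min(ε/2, r). Then for all x, y, z ∈ X, if d_{3r}(x,y) < ε' and d_{3r}(y,z) < ε', then d_r(x,z) < ε; equivalently, U_{3r,ε'} ∘ U_{3r,ε'} ⊆ U_{r,ε}. -/
open ENNReal

/-- The weaker `d_r`-axioms for a family of metric-like functions
`d : ℝ → X → X → ℝ≥0∞` indexed by `r > 0`. -/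
structure WeakerDr {X : Type*} (d : ℝ → X → X → ℝ≥0∞) : Prop where
  self : ∀ (x : X) (r : ℝ), 0 < r → d r x x = 0
  mono : ∀ (x y : X) (r₁ r₂ : ℝ), 0 < r₁ → r₁ ≤ r₂ → d r₁ x y ≤ d r₂ x y
  usc : ∀ (x y : X) (r ε : ℝ), 0 < r → 0 < ε → d r x y < ENNReal.ofReal ε →
    ∃ δ : ℝ, 0 < δ ∧ d (r + δ) x y < ENNReal.ofReal ε
  weaker_tri : ∀ (x y z : X) (r₁ r₂ r₃ : ℝ), 0 < r₁ → 0 < r₂ → 0 < r₃ →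
    d (r₁ + r₂ + r₃) x y < ENNReal.ofReal r₃ → d (r₁ + r₂ + r₃) y z < ENNReal.ofReal r₂ →
    d r₁ x z ≤ d (r₁ + r₂ + r₃) x y + d (r₁ + r₂ + r₃) y z

/-- The basic entourage `U_{r,ε} = {(x,y) | d_r(x,y) < ε}`. -/
def entourageDr {X : Type*} (d : ℝ → X → X → ℝ≥0∞) (r ε : ℝ) : Set (X × X) :=
  {p | d r p.1 p.2 < ENNReal.ofReal ε}

theorem stmt_8 {X : Type*} (d : ℝ → X → X → ℝ≥0∞) (h : WeakerDr d)
    (r ε : ℝ) (hr : 0 < r) (hε : 0 < ε) :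
    ∀ x y z : X,
      d (3 * r) x y < ENNReal.ofReal (min (ε / 2) r) →
      d (3 * r) y z < ENNReal.ofReal (min (ε / 2) r) →
      d r x z < ENNReal.ofReal ε := by
  intro x y z hxy hyz
  have h3 : r + r + r = 3 * r := by ring
  have hmin_r : ENNReal.ofReal (min (ε / 2) r) ≤ ENNReal.ofReal r :=
    ENNReal.ofReal_le_ofReal (min_le_right _ _)
  have hmin_e : ENNReal.ofReal (min (ε / 2) r) ≤ ENNReal.ofReal (ε / 2) :=
    ENNReal.ofReal_le_ofReal (min_le_left _ _)
  have hxy' : d (r + r + r) x y < ENNReal.ofReal r := by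
    rw [h3]; exact lt_of_lt_of_le hxy hmin_r
  have hyz' : d (r + r + r) y z < ENNReal.ofReal r := by
    rw [h3]; exact lt_of_lt_of_le hyz hmin_r
  have htri := h.weaker_tri x y z r r r hr hr hr hxy' hyz'
  rw [h3] at htri
  calc d r x z ≤ d (3 * r) x y + d (3 * r) y z := htri
    _ < ENNReal.ofReal (ε / 2) + ENNReal.ofReal (ε / 2) :=
        ENNReal.add_lt_add (lt_of_lt_of_le hxy hmin_e) (lt_of_lt_of_le hyz hmin_e)
    _ = ENNReal.ofReal ε := by
        rw [← ENNReal.ofReal_add (by linarith) (by linarith)]; ring_nf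
end

section
/- Let (X, {d_r}) satisfy the weaker d_r-axioms, and let 𝒰 = {U ⊆ X × X | ∃ r > 0, ε > 0, U_{r,ε} ⊆ U}. Then 𝒰 is a quasi-uniformity on X: (a) if U ∈ 𝒰 and U ⊆ V ⊆ X × X then V ∈ 𝒰; (b) if U, V ∈ 𝒰 then U ∩ V ∈ 𝒰; (c) every U ∈ 𝒰 contains the diagonal {(x,x) | x ∈ X}; (d) for every U ∈ 𝒰 there exists V ∈ 𝒰 with V ∘ V ⊆ U. -/
open ENNReal

/-- The collection of entourages `𝒰 = {U | ∃ r > 0, ε > 0, U_{r,ε} ⊆ U}`. -/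
def quasiUnifDr {X : Type*} (d : ℝ → X → X → ℝ≥0∞) : Set (Set (X × X)) :=
  {U | ∃ r ε : ℝ, 0 < r ∧ 0 < ε ∧ entourageDr d r ε ⊆ U}


lemma entourageDr_subset_of_le {X : Type*} (d : ℝ → X → X → ℝ≥0∞) (r : ℝ) {ε ε' : ℝ}
    (hε : ε ≤ ε') : entourageDr d r ε ⊆ entourageDr d r ε' :=
  fun _ hp => hp.trans_le (ENNReal.ofReal_le_ofReal hε)

lemma quasiUnifDr_mono {X : Type*} {d : ℝ → X → X → ℝ≥0∞} {U V : Set (X × X)}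
    (hU : U ∈ quasiUnifDr d) (hUV : U ⊆ V) : V ∈ quasiUnifDr d :=
  let ⟨r, ε, hr, hε, hsub⟩ := hU
  ⟨r, ε, hr, hε, hsub.trans hUV⟩

namespace WeakerDr

variable {X : Type*} {d : ℝ → X → X → ℝ≥0∞}

lemma entourageDr_subset_of_radius_le (h : WeakerDr d) {r r' : ℝ} (hr : 0 < r) (hrr' : r ≤ r')
    (ε : ℝ) : entourageDr d r' ε ⊆ entourageDr d r ε :=
  fun p hp => (h.mono p.1 p.2 r r' hr hrr').trans_lt hp

lemma self_mem_entourageDr (h : WeakerDr d) {r ε : ℝ} (hr : 0 < r) (hε : 0 < ε)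
    (x : X) : (x, x) ∈ entourageDr d r ε := by
  show d r x x < ENNReal.ofReal ε
  rw [h.self x r hr]
  exact ENNReal.ofReal_pos.2 hε

-- Weaker triangle inequality with `r₂ = r₃ = ε / 2`: legs shorter than `ε / 2` meet its
-- side conditions.
lemma comp_entourageDr_subset (h : WeakerDr d) {r ε : ℝ} (hr : 0 < r) (hε : 0 < ε) :
    SetRel.comp (entourageDr d (r + ε) (ε / 2)) (entourageDr d (r + ε) (ε / 2)) ⊆
      entourageDr d r ε := by
  rintro ⟨x, z⟩ ⟨y, hxy, hyz⟩
  have hsum : r + ε / 2 + ε / 2 = r + ε := by ring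
  have hxy' : d (r + ε / 2 + ε / 2) x y < ENNReal.ofReal (ε / 2) := hsum ▸ hxy
  have hyz' : d (r + ε / 2 + ε / 2) y z < ENNReal.ofReal (ε / 2) := hsum ▸ hyz
  show d r x z < ENNReal.ofReal ε
  calc d r x z ≤ d (r + ε / 2 + ε / 2) x y + d (r + ε / 2 + ε / 2) y z :=
        h.weaker_tri x y z r (ε / 2) (ε / 2) hr (half_pos hε) (half_pos hε) hxy' hyz'
    _ < ENNReal.ofReal (ε / 2) + ENNReal.ofReal (ε / 2) := ENNReal.add_lt_add hxy' hyz'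
    _ = ENNReal.ofReal ε := by
        rw [← ENNReal.ofReal_add (half_pos hε).le (half_pos hε).le, add_halves]

lemma inter_mem_quasiUnifDr (h : WeakerDr d) {U V : Set (X × X)} (hU : U ∈ quasiUnifDr d)
    (hV : V ∈ quasiUnifDr d) : U ∩ V ∈ quasiUnifDr d := by
  obtain ⟨r₁, ε₁, hr₁, hε₁, hU⟩ := hU
  obtain ⟨r₂, ε₂, hr₂, hε₂, hV⟩ := hV
  refine ⟨max r₁ r₂, min ε₁ ε₂, lt_max_of_lt_left hr₁, lt_min hε₁ hε₂,
    Set.subset_inter ?_ ?_⟩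
  · exact (entourageDr_subset_of_le d _ (min_le_left _ _)).trans <|
      (h.entourageDr_subset_of_radius_le hr₁ (le_max_left _ _) _).trans hU
  · exact (entourageDr_subset_of_le d _ (min_le_right _ _)).trans <|
      (h.entourageDr_subset_of_radius_le hr₂ (le_max_right _ _) _).trans hV

lemma refl_mem_of_mem_quasiUnifDr (h : WeakerDr d) {U : Set (X × X)} (hU : U ∈ quasiUnifDr d)
    (x : X) : (x, x) ∈ U :=
  let ⟨_, _, hr, hε, hsub⟩ := hU
  hsub (h.self_mem_entourageDr hr hε x)

lemma exists_comp_subset (h : WeakerDr d) {U : Set (X × X)} (hU : U ∈ quasiUnifDr d) :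
    ∃ V ∈ quasiUnifDr d, SetRel.comp V V ⊆ U := by
  obtain ⟨r, ε, hr, hε, hsub⟩ := hU
  exact ⟨entourageDr d (r + ε) (ε / 2), ⟨r + ε, ε / 2, by positivity, half_pos hε, le_rfl⟩,
    (h.comp_entourageDr_subset hr hε).trans hsub⟩

end WeakerDr

theorem stmt_9 {X : Type*} (d : ℝ → X → X → ℝ≥0∞) (h : WeakerDr d) :
    (∀ U V : Set (X × X), U ∈ quasiUnifDr d → U ⊆ V → V ∈ quasiUnifDr d) ∧
    (∀ U V : Set (X × X), U ∈ quasiUnifDr d → V ∈ quasiUnifDr d →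
      U ∩ V ∈ quasiUnifDr d) ∧
    (∀ U ∈ quasiUnifDr d, ∀ x : X, (x, x) ∈ U) ∧
    (∀ U ∈ quasiUnifDr d, ∃ V ∈ quasiUnifDr d, SetRel.comp V V ⊆ U) :=
  ⟨fun _ _ => quasiUnifDr_mono, fun _ _ => h.inter_mem_quasiUnifDr,
    fun _ => h.refl_mem_of_mem_quasiUnifDr, fun _ => h.exists_comp_subset⟩
end

section
/- Let (X, {d_r}) satisfy the weaker d_r-axioms and, for n ∈ ℕ, set W_n = {(x,y) ∈ X × X | d_{3^{2n}}(x,y) < 3^{-n}}. Then for every n ∈ ℕ, W_{n+1} ∘ W_{n+1} ∘ W_{n+1} ⊆ W_n. -/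
open ENNReal

/-- `W_n = {(x,y) | d_{3^{2n}}(x,y) < 3^{-n}}`. -/
def Wrel {X : Type*} (d : ℝ → X → X → ℝ≥0∞) (n : ℕ) : Set (X × X) :=
  {p | d ((3 : ℝ) ^ (2 * n)) p.1 p.2 < ENNReal.ofReal (((3 : ℝ) ^ n)⁻¹)}

/-
The weaker triangle inequality, combined with monotonicity in `r`, says that an `a`-step at
scale `s₁` followed by a `b`-step at scale `s₂` is an `(a + b)`-step at any scale `r` with
`r + a + b ≤ min s₁ s₂`. Put `ε = 3^{-(n+1)}` and `r = 3^{2n}`, so that `W_{n+1}` consists of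
`ε`-steps at scale `9r`. Two of them give a `2ε`-step at scale `9r - 2ε`, and one more a
`3ε = 3^{-n}`-step at scale `r`, which is allowed because `r + 5ε ≤ 9r - 2ε` as `r ≥ 1 ≥ 3ε`.
-/

theorem WeakerDr.comp_entourageDr_subset_s11 {X : Type*} {d : ℝ → X → X → ℝ≥0∞} (h : WeakerDr d)
    {r s₁ s₂ a b : ℝ} (hr : 0 < r) (ha : 0 < a) (hb : 0 < b)
    (hs₁ : r + a + b ≤ s₁) (hs₂ : r + a + b ≤ s₂) :
    SetRel.comp (entourageDr d s₁ a) (entourageDr d s₂ b) ⊆ entourageDr d r (a + b) := by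
  rintro ⟨x, z⟩ ⟨y, hxy, hyz⟩
  have hs : 0 < r + b + a := by positivity
  have hxy' : d (r + b + a) x y < ENNReal.ofReal a :=
    (h.mono x y _ s₁ hs (by linarith)).trans_lt hxy
  have hyz' : d (r + b + a) y z < ENNReal.ofReal b :=
    (h.mono y z _ s₂ hs (by linarith)).trans_lt hyz
  calc d r x z ≤ d (r + b + a) x y + d (r + b + a) y z :=
        h.weaker_tri x y z r b a hr hb ha hxy' hyz'
    _ < ENNReal.ofReal a + ENNReal.ofReal b := ENNReal.add_lt_add hxy' hyz'
    _ = ENNReal.ofReal (a + b) := (ENNReal.ofReal_add ha.le hb.le).symm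

theorem stmt_11 {X : Type*} (d : ℝ → X → X → ℝ≥0∞) (h : WeakerDr d) (n : ℕ) :
    SetRel.comp (SetRel.comp (Wrel d (n + 1)) (Wrel d (n + 1))) (Wrel d (n + 1)) ⊆ Wrel d n := by
  set ε : ℝ := ((3 : ℝ) ^ (n + 1))⁻¹
  set r : ℝ := (3 : ℝ) ^ (2 * n)
  have hε : 0 < ε := by positivity
  have hr : 1 ≤ r := one_le_pow₀ (by norm_num)
  have hε_le : 3 * ε ≤ 1 := by
    have h3n : (1 : ℝ) ≤ 3 ^ n := one_le_pow₀ (by norm_num)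
    simpa [ε, pow_succ, mul_comm] using inv_le_one_of_one_le₀ h3n
  have hW : Wrel d (n + 1) = entourageDr d (9 * r) ε := by
    simp only [Wrel, entourageDr, r, ε, mul_add, pow_add]
    norm_num [mul_comm]
  have hW' : Wrel d n = entourageDr d r (ε + ε + ε) := by
    simp only [Wrel, entourageDr, r, ε, pow_succ]
    ring_nf
  rw [hW, hW']
  calc SetRel.comp (SetRel.comp (entourageDr d (9 * r) ε) (entourageDr d (9 * r) ε))
          (entourageDr d (9 * r) ε)
      ⊆ SetRel.comp (entourageDr d (9 * r - 2 * ε) (ε + ε)) (entourageDr d (9 * r) ε) := by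
        gcongr
        exact h.comp_entourageDr_subset_s11 (by linarith) hε hε (by linarith) (by linarith)
    _ ⊆ entourageDr d r (ε + ε + ε) :=
        h.comp_entourageDr_subset_s11 (by linarith) (by linarith) hε (by linarith) (by linarith)
end

section
/- Let (X, {d_r}) satisfy the weaker d_r-axioms. Then there exists a quasi-pseudo-metric ρ : X × X → [0,∞), i.e. ρ(x,x) = 0 for all x and ρ(x,z) ≤ ρ(x,y) + ρ(y,z) for all x, y, z, which induces the same entourage filter as the family {d_r}: (i) for all r > 0 and ε > 0 there exists ε' > 0 such that ρ(x,y) < ε' implies d_r(x,y) < ε; and (ii) for every ε > 0 there exist r > 0 and ε' > 0 such that d_r(x,y) < ε' implies ρ(x,y) < ε. -/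
open ENNReal

/-!
Kelley's metrization lemma works without symmetry. For reflexive relations `V n` with
`V (n+1) ○ V (n+1) ○ V (n+1) ⊆ V n`, let `ρ` be the infimum, over finite chains from `x` to `y`,
of the sum of `2⁻ⁿ` over the links, `n` being the finest level containing the link. Then
`V n ⊆ {ρ ≤ 2⁻ⁿ}`, and conversely a chain of total length `< 2⁻⁽ⁿ⁺¹⁾` is split at the link where
its partial sums cross half the total; both halves and that link lie in `V (n+1)` by induction on
the length, so the endpoints lie in `V n`. For the family `d_r`, two applications of the weaker
triangle inequality show that `{d_(n+1) < 3^-(n+1)}` is such a sequence, and it is a base of the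
entourage filter of the family because the radii exhaust `(0, ∞)` and the scales tend to `0`.
-/

open Finset Filter Topology

noncomputable section ChainDist

variable {X : Type*}

def chainSum (f : X → X → ℝ≥0∞) (u : ℕ → X) (k : ℕ) : ℝ≥0∞ :=
  ∑ i ∈ range k, f (u i) (u (i + 1))

def chainDist (f : X → X → ℝ≥0∞) (x y : X) : ℝ≥0∞ :=
  ⨅ (k : ℕ) (u : ℕ → X) (_ : u 0 = x) (_ : u k = y), chainSum f u k

variable {f : X → X → ℝ≥0∞}

lemma chainDist_le_chainSum {x y : X} {u : ℕ → X} {k : ℕ} (h₀ : u 0 = x) (hk : u k = y) :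
    chainDist f x y ≤ chainSum f u k :=
  iInf_le_of_le k <| iInf_le_of_le u <| iInf_le_of_le h₀ <| iInf_le_of_le hk le_rfl

lemma chainDist_lt_iff {x y : X} {c : ℝ≥0∞} :
    chainDist f x y < c ↔ ∃ k u, u 0 = x ∧ u k = y ∧ chainSum f u k < c := by
  simp only [chainDist, iInf_lt_iff, exists_prop]

@[simp]
lemma chainDist_self (x : X) : chainDist f x x = 0 :=
  nonpos_iff_eq_zero.mp (chainDist_le_chainSum (u := fun _ => x) (k := 0) rfl rfl)

lemma chainDist_le (x y : X) : chainDist f x y ≤ f x y := by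
  refine (chainDist_le_chainSum (u := fun i => if i = 0 then x else y) (k := 1) rfl rfl).trans ?_
  simp [chainSum]

lemma chainSum_append {u v : ℕ → X} {k : ℕ} (h : u k = v 0) (m : ℕ) :
    chainSum f (fun i => if i ≤ k then u i else v (i - k)) (k + m) =
      chainSum f u k + chainSum f v m := by
  have hright : ∀ i, (if k + i ≤ k then u (k + i) else v (k + i - k)) = v i := by
    intro i
    rcases Nat.eq_zero_or_pos i with rfl | hi
    · simpa using h
    · rw [if_neg (by omega), Nat.add_sub_cancel_left]
  rw [chainSum, sum_range_add]
  congr 1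
  · refine sum_congr rfl fun i hi => ?_
    rw [mem_range] at hi
    rw [if_pos hi.le, if_pos (Nat.succ_le_of_lt hi)]
  · exact sum_congr rfl fun i _ => by rw [hright, add_assoc, hright]

lemma chainDist_triangle (x y z : X) : chainDist f x z ≤ chainDist f x y + chainDist f y z := by
  refine ENNReal.le_iInf_add_iInf fun k m => ENNReal.le_iInf_add_iInf fun u v =>
    ENNReal.le_iInf₂_add_iInf₂ fun hu₀ huk hv₀ hvm => ?_
  rw [← chainSum_append (huk.trans hv₀.symm)]
  refine chainDist_le_chainSum (by simpa using hu₀) ?_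
  rcases Nat.eq_zero_or_pos m with rfl | hm
  · simpa [huk] using hv₀.symm.trans hvm
  · simpa [show ¬ k + m ≤ k by omega] using hvm

end ChainDist

lemma ENNReal.exists_sum_range_split_le_half (a : ℕ → ℝ≥0∞) {k : ℕ} (hk : 0 < k) :
    ∃ j l, j + 1 + l = k ∧ ∑ i ∈ range j, a i ≤ (∑ i ∈ range k, a i) / 2 ∧
      ∑ i ∈ range l, a (j + 1 + i) ≤ (∑ i ∈ range k, a i) / 2 := by
  classical
  set T := ∑ i ∈ range k, a i
  set j := Nat.findGreatest (fun j => ∑ i ∈ range j, a i ≤ T / 2) (k - 1)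
  have hjk : j ≤ k - 1 := Nat.findGreatest_le _
  refine ⟨j, k - 1 - j, by omega,
    Nat.findGreatest_spec (P := fun j => ∑ i ∈ range j, a i ≤ T / 2) (Nat.zero_le _) (by simp), ?_⟩
  rcases Nat.eq_zero_or_pos (k - 1 - j) with hl | hl
  · simp [hl]
  have hsplit : ∑ i ∈ range (j + 1), a i + ∑ i ∈ range (k - 1 - j), a (j + 1 + i) = T := by
    rw [← sum_range_add, show j + 1 + (k - 1 - j) = k by omega]
  have hhead : T / 2 < ∑ i ∈ range (j + 1), a i :=
    not_le.mp (Nat.findGreatest_is_greatest (Nat.lt_succ_self j) (by omega))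
  by_contra! htail
  have := ENNReal.add_lt_add hhead htail
  rw [ENNReal.add_halves, hsplit] at this
  exact lt_irrefl T this

section Kelley

variable {X : Type*} {V : ℕ → Set (X × X)}

structure IsKelleySeq (V : ℕ → Set (X × X)) : Prop where
  refl : ∀ n x, (x, x) ∈ V n
  comp_three : ∀ n {x y z w}, (x, y) ∈ V (n + 1) → (y, z) ∈ V (n + 1) → (z, w) ∈ V (n + 1) →
    (x, w) ∈ V n

lemma IsKelleySeq.antitone (hV : IsKelleySeq V) : Antitone V :=
  antitone_nat_of_succ_le fun n ⟨_, y⟩ hxy => hV.comp_three n hxy (hV.refl _ y) (hV.refl _ y)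

open Classical in
noncomputable def levelDist (V : ℕ → Set (X × X)) (x y : X) : ℝ≥0∞ :=
  ⨅ n : ℕ, if (x, y) ∈ V n then 2⁻¹ ^ n else 1

lemma levelDist_le_of_mem {n : ℕ} {x y : X} (h : (x, y) ∈ V n) : levelDist V x y ≤ 2⁻¹ ^ n :=
  (iInf_le _ n).trans_eq (if_pos h)

lemma levelDist_le_one (x y : X) : levelDist V x y ≤ 1 := by
  refine (iInf_le _ 0).trans ?_
  split_ifs <;> simp

lemma IsKelleySeq.mem_of_levelDist_lt (hV : IsKelleySeq V) {n : ℕ} {x y : X}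
    (h : levelDist V x y < 2⁻¹ ^ n) : (x, y) ∈ V n := by
  obtain ⟨m, hm⟩ := iInf_lt_iff.mp h
  split_ifs at hm with hmem
  · refine hV.antitone (le_of_not_ge fun hmn => hm.not_ge ?_) hmem
    exact pow_le_pow_right_of_le_one' (by norm_num) hmn
  · exact (hm.not_ge (pow_le_one₀ zero_le (by norm_num))).elim

lemma IsKelleySeq.mem_of_chainSum_lt (hV : IsKelleySeq V) (k : ℕ) :
    ∀ (u : ℕ → X) (n : ℕ), chainSum (levelDist V) u k < 2⁻¹ ^ (n + 1) → (u 0, u k) ∈ V n := by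
  induction k using Nat.strong_induction_on with
  | _ k ih =>
  intro u n hT
  rcases Nat.eq_zero_or_pos k with rfl | hk
  · exact hV.refl n _
  obtain ⟨j, l, rfl, hhead, htail⟩ :=
    ENNReal.exists_sum_range_split_le_half (fun i => levelDist V (u i) (u (i + 1))) hk
  have hhalf : chainSum (levelDist V) u (j + 1 + l) / 2 < 2⁻¹ ^ (n + 1 + 1) := by
    rw [pow_succ, div_eq_mul_inv]
    exact ENNReal.mul_lt_mul_left (by norm_num) (by norm_num) hT
  have hlink : levelDist V (u j) (u (j + 1)) < 2⁻¹ ^ (n + 1) :=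
    (single_le_sum (f := fun i => levelDist V (u i) (u (i + 1))) (fun _ _ => zero_le)
      (mem_range.mpr (by omega))).trans_lt hT
  exact hV.comp_three n (ih j (by omega) u (n + 1) (hhead.trans_lt hhalf))
    (hV.mem_of_levelDist_lt hlink)
    (ih l (by omega) (fun i => u (j + 1 + i)) (n + 1) (htail.trans_lt hhalf))

lemma IsKelleySeq.mem_of_chainDist_lt (hV : IsKelleySeq V) {n : ℕ} {x y : X}
    (h : chainDist (levelDist V) x y < 2⁻¹ ^ (n + 1)) : (x, y) ∈ V n := by
  obtain ⟨k, u, rfl, rfl, hu⟩ := chainDist_lt_iff.mp h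
  exact hV.mem_of_chainSum_lt k u n hu

theorem IsKelleySeq.exists_quasiPseudoMetric (hV : IsKelleySeq V) :
    ∃ ρ : X → X → ℝ, (∀ x y, 0 ≤ ρ x y) ∧ (∀ x, ρ x x = 0) ∧
      (∀ x y z, ρ x z ≤ ρ x y + ρ y z) ∧ (∀ n x y, (x, y) ∈ V n → ρ x y ≤ 2⁻¹ ^ n) ∧
      (∀ n x y, ρ x y < 2⁻¹ ^ (n + 1) → (x, y) ∈ V n) := by
  have hle_pow {n : ℕ} {x y : X} (h : (x, y) ∈ V n) : chainDist (levelDist V) x y ≤ 2⁻¹ ^ n :=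
    (chainDist_le x y).trans (levelDist_le_of_mem h)
  have hne_top (x y : X) : chainDist (levelDist V) x y ≠ ⊤ :=
    ((chainDist_le x y).trans_lt ((levelDist_le_one x y).trans_lt one_lt_top)).ne
  have hpow (n : ℕ) : ENNReal.ofReal (2⁻¹ ^ n) = 2⁻¹ ^ n := by
    rw [ENNReal.ofReal_pow (by norm_num), ENNReal.ofReal_inv_of_pos two_pos, ENNReal.ofReal_ofNat]
  refine ⟨fun x y => (chainDist (levelDist V) x y).toReal, fun _ _ => toReal_nonneg,
    fun x => by simp, fun x y z => ?_, fun n x y h => ?_, fun n x y h => ?_⟩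
  · rw [← toReal_add (hne_top x y) (hne_top y z)]
    exact toReal_mono (add_ne_top.mpr ⟨hne_top x y, hne_top y z⟩) (chainDist_triangle x y z)
  · simpa [← hpow] using toReal_le_of_le_ofReal (by positivity) ((hpow n).trans_ge (hle_pow h))
  · refine hV.mem_of_chainDist_lt ?_
    rwa [← hpow, lt_ofReal_iff_toReal_lt (hne_top x y)]

end Kelley

namespace WeakerDr

variable {X : Type*} {d : ℝ → X → X → ℝ≥0∞}

lemma lt_add (h : WeakerDr d) {x y z : X} {r₁ r₂ r₃ : ℝ} (h₁ : 0 < r₁) (h₂ : 0 < r₂)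
    (h₃ : 0 < r₃) (hxy : d (r₁ + r₂ + r₃) x y < ENNReal.ofReal r₃)
    (hyz : d (r₁ + r₂ + r₃) y z < ENNReal.ofReal r₂) :
    d r₁ x z < ENNReal.ofReal (r₃ + r₂) := by
  rw [ENNReal.ofReal_add h₃.le h₂.le]
  exact (h.weaker_tri x y z r₁ r₂ r₃ h₁ h₂ h₃ hxy hyz).trans_lt (ENNReal.add_lt_add hxy hyz)

lemma lt_of_radius_le (h : WeakerDr d) {x y : X} {r₁ r₂ : ℝ} {c : ℝ≥0∞} (hr₁ : 0 < r₁)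
    (hr : r₁ ≤ r₂) (hc : d r₂ x y < c) : d r₁ x y < c :=
  (h.mono x y r₁ r₂ hr₁ hr).trans_lt hc

lemma lt_three_mul (h : WeakerDr d) {x y z w : X} {r s e : ℝ} (hr : 0 < r) (he : 0 < e)
    (hs : 5 * e ≤ s) (hxy : d (r + s) x y < ENNReal.ofReal e)
    (hyz : d (r + s) y z < ENNReal.ofReal e) (hzw : d (r + s) z w < ENNReal.ofReal e) :
    d r x w < ENNReal.ofReal (3 * e) := by
  have hrad : r + s - 2 * e + e + e = r + s := by ring
  have hxz : d (r + s - 2 * e) x z < ENNReal.ofReal (e + e) :=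
    h.lt_add (y := y) (by linarith) he he (by rwa [hrad]) (by rwa [hrad])
  have := h.lt_add (r₁ := r) (r₂ := e) (r₃ := e + e) hr he (by linarith)
    (h.lt_of_radius_le (by linarith) (by linarith) hxz)
    (h.lt_of_radius_le (by linarith) (by linarith) hzw)
  rwa [show e + e + e = 3 * e by ring] at this

end WeakerDr

/-- The radii `n + 1` grow by `1 ≥ 5 e` per level, which pays for the two weaker triangle
inequalities merging three links; the scales shrink by the factor `3` this merging costs. -/
def entourageDrSeq {X : Type*} (d : ℝ → X → X → ℝ≥0∞) (n : ℕ) : Set (X × X) :=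
  entourageDr d ((n : ℝ) + 1) ((3 : ℝ)⁻¹ ^ (n + 1))

lemma mem_entourageDrSeq {X : Type*} {d : ℝ → X → X → ℝ≥0∞} {n : ℕ} {x y : X} :
    (x, y) ∈ entourageDrSeq d n ↔ d ((n : ℝ) + 1) x y < ENNReal.ofReal ((3 : ℝ)⁻¹ ^ (n + 1)) :=
  Iff.rfl

lemma WeakerDr.isKelleySeq_entourageDrSeq {X : Type*} {d : ℝ → X → X → ℝ≥0∞} (h : WeakerDr d) :
    IsKelleySeq (entourageDrSeq d) where
  refl n x := by
    rw [mem_entourageDrSeq, h.self x _ (by positivity)]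
    exact ENNReal.ofReal_pos.mpr (by positivity)
  comp_three n x y z w hxy hyz hzw := by
    have hsmall : 5 * (3 : ℝ)⁻¹ ^ (n + 1 + 1) ≤ 1 := by
      have : (3 : ℝ)⁻¹ ^ (n + 1 + 1) ≤ 3⁻¹ ^ 2 :=
        pow_le_pow_of_le_one (by norm_num) (by norm_num) (by omega)
      linarith [show (3 : ℝ)⁻¹ ^ 2 = 1 / 9 by norm_num]
    rw [mem_entourageDrSeq] at hxy hyz hzw ⊢
    push_cast at hxy hyz hzw
    rw [show (3 : ℝ)⁻¹ ^ (n + 1) = 3 * 3⁻¹ ^ (n + 1 + 1) by field_simp; ring]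
    exact h.lt_three_mul (by positivity) (by positivity) hsmall hxy hyz hzw

theorem stmt_13 {X : Type*} (d : ℝ → X → X → ℝ≥0∞) (h : WeakerDr d) :
    ∃ ρ : X → X → ℝ,
      (∀ x y : X, 0 ≤ ρ x y) ∧
      (∀ x : X, ρ x x = 0) ∧
      (∀ x y z : X, ρ x z ≤ ρ x y + ρ y z) ∧
      (∀ r ε : ℝ, 0 < r → 0 < ε → ∃ ε' : ℝ, 0 < ε' ∧
        ∀ x y : X, ρ x y < ε' → d r x y < ENNReal.ofReal ε) ∧
      (∀ ε : ℝ, 0 < ε → ∃ r ε' : ℝ, 0 < r ∧ 0 < ε' ∧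
        ∀ x y : X, d r x y < ENNReal.ofReal ε' → ρ x y < ε) := by
  obtain ⟨ρ, hnonneg, hself, htri, hle, hmem⟩ :=
    h.isKelleySeq_entourageDrSeq.exists_quasiPseudoMetric
  refine ⟨ρ, hnonneg, hself, htri, fun r ε hr hε => ?_, fun ε hε => ?_⟩
  · have hscale : Tendsto (fun n : ℕ => (3 : ℝ)⁻¹ ^ (n + 1)) atTop (𝓝 0) :=
      (_root_.tendsto_pow_atTop_nhds_zero_of_lt_one (by norm_num) (by norm_num)).comp
        (tendsto_add_atTop_nat 1)
    obtain ⟨n, hrn, hεn⟩ := ((tendsto_natCast_atTop_atTop.eventually_ge_atTop r).and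
      (hscale.eventually (gt_mem_nhds hε))).exists
    refine ⟨2⁻¹ ^ (n + 1), by positivity, fun x y hxy => ?_⟩
    exact (h.lt_of_radius_le hr (by linarith) (hmem n x y hxy)).trans_le
      (ENNReal.ofReal_le_ofReal hεn.le)
  · obtain ⟨n, hn⟩ := exists_pow_lt_of_lt_one hε (by norm_num : (2 : ℝ)⁻¹ < 1)
    exact ⟨n + 1, 3⁻¹ ^ (n + 1), by positivity, by positivity,
      fun x y hxy => (hle n x y hxy).trans_lt hn⟩
end

section
/- Let (X, {d_r}) satisfy the weaker d_r-axioms; suppose each d_r is symmetric (d_r(x,y) = d_r(y,x) for all r > 0 and x, y ∈ X) and the family is non-degenerate (d_r(x,y) = 0 for all r > 0 implies x = y). Then there exists a metric ρ on X (symmetric, satisfying the triangle inequality, with ρ(x,y) = 0 iff x = y) such that: (i) for all r > 0 and ε > 0 there exists ε' > 0 such that ρ(x,y) < ε' implies d_r(x,y) < ε; and (ii) for every ε > 0 there exist r > 0 and ε' > 0 such that d_r(x,y) < ε' implies ρ(x,y) < ε. In particular the topology induced by the family {d_r} is metrizable. -/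
/-
The sets `V n = {(x, y) | d_{n+1}(x, y) < 2⁻ⁿ}` are reflexive, symmetric and decreasing,
every `U_{r,ε}` contains some `V n`, and the weaker triangle inequality (with `r₂ = r₃ = 1/2`)
gives `V (n+1) ○ V (n+1) ⊆ V n`. So they are a countable base of a uniform structure, which is
therefore pseudometrizable. Comparing the two bases yields (i) and (ii), and (i) together with
non-degeneracy makes the pseudometric a metric.
-/

open ENNReal

open Filter
open scoped SetRel Uniformity

theorem ENNReal.eq_zero_of_forall_lt_ofReal {a : ℝ≥0∞}
    (h : ∀ ε : ℝ, 0 < ε → a < ENNReal.ofReal ε) : a = 0 := by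
  by_contra ha
  obtain ⟨ε, -, hε, hεa⟩ := ENNReal.lt_iff_exists_real_btwn.1 (pos_iff_ne_zero.2 ha)
  exact (h ε (ENNReal.ofReal_pos.1 hε)).not_gt hεa

def basicEntourage {X : Type*} (d : ℝ → X → X → ℝ≥0∞) (n : ℕ) : Set (X × X) :=
  entourageDr d (n + 1) ((1 / 2) ^ n)

def drUniformity {X : Type*} (d : ℝ → X → X → ℝ≥0∞) : Filter (X × X) :=
  ⨅ n, 𝓟 (basicEntourage d n)

theorem preimage_swap_basicEntourage {X : Type*} {d : ℝ → X → X → ℝ≥0∞}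
    (hsymm : ∀ r : ℝ, 0 < r → ∀ x y : X, d r x y = d r y x) (n : ℕ) :
    Prod.swap ⁻¹' basicEntourage d n = basicEntourage d n := by
  ext ⟨x, y⟩
  simp only [basicEntourage, entourageDr, Set.mem_preimage, Prod.swap_prod_mk, Set.mem_ofPred_eq,
    hsymm _ (by positivity : (0 : ℝ) < n + 1) x y]

namespace WeakerDr

variable {X : Type*} {d : ℝ → X → X → ℝ≥0∞}

theorem entourageDr_subset_entourageDr (h : WeakerDr d) {r r' ε ε' : ℝ} (hr' : 0 < r')
    (hr : r' ≤ r) (hε : ε ≤ ε') : entourageDr d r ε ⊆ entourageDr d r' ε' := fun _ hp =>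
  (h.mono _ _ _ _ hr' hr).trans_lt (hp.trans_le (ENNReal.ofReal_le_ofReal hε))

theorem basicEntourage_antitone (h : WeakerDr d) : Antitone (basicEntourage d) := fun m n hmn =>
  h.entourageDr_subset_entourageDr (by positivity) (by gcongr)
    (pow_le_pow_of_le_one (by norm_num) (by norm_num) hmn)

theorem exists_basicEntourage_subset (h : WeakerDr d) {r ε : ℝ} (hr : 0 < r) (hε : 0 < ε) :
    ∃ n, basicEntourage d n ⊆ entourageDr d r ε := by
  obtain ⟨m, hm⟩ := exists_pow_lt_of_lt_one hε one_half_lt_one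
  refine ⟨max m ⌈r⌉₊, h.entourageDr_subset_entourageDr hr ?_ ?_⟩
  · calc r ≤ ⌈r⌉₊ := Nat.le_ceil r
      _ ≤ (max m ⌈r⌉₊ : ℕ) := by exact_mod_cast le_max_right m ⌈r⌉₊
      _ ≤ _ := le_add_of_nonneg_right zero_le_one
  · calc (1 / 2 : ℝ) ^ max m ⌈r⌉₊ ≤ (1 / 2) ^ m :=
          pow_le_pow_of_le_one (by norm_num) (by norm_num) (le_max_left _ _)
      _ ≤ ε := hm.le

theorem mem_basicEntourage_self (h : WeakerDr d) (x : X) (n : ℕ) :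
    (x, x) ∈ basicEntourage d n := by
  simp only [basicEntourage, entourageDr, Set.mem_ofPred_eq, h.self x _ (Nat.cast_add_one_pos n)]
  exact ENNReal.ofReal_pos.2 (by positivity)

theorem basicEntourage_comp_subset (h : WeakerDr d) (n : ℕ) :
    basicEntourage d (n + 1) ○ basicEntourage d (n + 1) ⊆ basicEntourage d n := by
  rintro ⟨x, z⟩ ⟨y, hxy, hyz⟩
  have hr : ((n + 1 : ℕ) : ℝ) + 1 = (n + 1) + 1 / 2 + 1 / 2 := by push_cast; ring
  have hsmall : ENNReal.ofReal ((1 / 2) ^ (n + 1)) ≤ ENNReal.ofReal (1 / 2) :=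
    ENNReal.ofReal_le_ofReal (pow_le_of_le_one (by norm_num) (by norm_num) n.succ_ne_zero)
  simp only [basicEntourage, entourageDr, Set.mem_ofPred_eq, hr] at hxy hyz ⊢
  calc d (n + 1) x z ≤ d ((n + 1) + 1 / 2 + 1 / 2) x y + d ((n + 1) + 1 / 2 + 1 / 2) y z :=
        h.weaker_tri x y z _ _ _ (by positivity) one_half_pos one_half_pos
          (hxy.trans_le hsmall) (hyz.trans_le hsmall)
    _ < ENNReal.ofReal ((1 / 2) ^ (n + 1)) + ENNReal.ofReal ((1 / 2) ^ (n + 1)) :=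
        ENNReal.add_lt_add hxy hyz
    _ = ENNReal.ofReal ((1 / 2) ^ n) := by
        rw [← ENNReal.ofReal_add (by positivity) (by positivity)]
        ring_nf

theorem mem_drUniformity_iff (h : WeakerDr d) {s : Set (X × X)} :
    s ∈ drUniformity d ↔ ∃ n, basicEntourage d n ⊆ s := by
  simpa [drUniformity] using
    (hasBasis_iInf_principal h.basicEntourage_antitone.directed_ge).mem_iff

theorem entourageDr_mem_drUniformity (h : WeakerDr d) {r ε : ℝ} (hr : 0 < r) (hε : 0 < ε) :
    entourageDr d r ε ∈ drUniformity d :=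
  h.mem_drUniformity_iff.2 (h.exists_basicEntourage_subset hr hε)

abbrev toUniformSpace (h : WeakerDr d) (hsymm : ∀ r : ℝ, 0 < r → ∀ x y : X, d r x y = d r y x) :
    UniformSpace X :=
  .ofCore <| .mk' (drUniformity d)
    (fun _ hs x => by
      obtain ⟨n, hn⟩ := h.mem_drUniformity_iff.1 hs
      exact hn (h.mem_basicEntourage_self x n))
    (fun _ hs => by
      obtain ⟨n, hn⟩ := h.mem_drUniformity_iff.1 hs
      exact h.mem_drUniformity_iff.2 ⟨n, by
        rw [← preimage_swap_basicEntourage hsymm n]; exact Set.preimage_mono hn⟩)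
    (fun _ hs => by
      obtain ⟨n, hn⟩ := h.mem_drUniformity_iff.1 hs
      exact ⟨_, h.mem_drUniformity_iff.2 ⟨n + 1, subset_rfl⟩,
        (h.basicEntourage_comp_subset n).trans hn⟩)

theorem exists_pseudoMetricSpace_uniformity_eq (h : WeakerDr d)
    (hsymm : ∀ r : ℝ, 0 < r → ∀ x y : X, d r x y = d r y x) :
    ∃ I : PseudoMetricSpace X, 𝓤[I.toUniformSpace] = drUniformity d := by
  let := h.toUniformSpace hsymm
  have : IsCountablyGenerated (𝓤 X) := isCountablyGenerated_seq _
  obtain ⟨I, hI⟩ := UniformSpace.metrizable_uniformity X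
  exact ⟨I, by rw [hI]; rfl⟩

end WeakerDr

theorem stmt_15 {X : Type*} (d : ℝ → X → X → ℝ≥0∞) (h : WeakerDr d)
    (hsymm : ∀ (r : ℝ), 0 < r → ∀ x y : X, d r x y = d r y x)
    (hnd : ∀ x y : X, (∀ r : ℝ, 0 < r → d r x y = 0) → x = y) :
    ∃ ρ : X → X → ℝ,
      (∀ x y : X, 0 ≤ ρ x y) ∧
      (∀ x y : X, ρ x y = ρ y x) ∧
      (∀ x y z : X, ρ x z ≤ ρ x y + ρ y z) ∧
      (∀ x y : X, ρ x y = 0 ↔ x = y) ∧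
      (∀ r ε : ℝ, 0 < r → 0 < ε → ∃ ε' : ℝ, 0 < ε' ∧
        ∀ x y : X, ρ x y < ε' → d r x y < ENNReal.ofReal ε) ∧
      (∀ ε : ℝ, 0 < ε → ∃ r ε' : ℝ, 0 < r ∧ 0 < ε' ∧
        ∀ x y : X, d r x y < ENNReal.ofReal ε' → ρ x y < ε) := by
  obtain ⟨I, hI⟩ := h.exists_pseudoMetricSpace_uniformity_eq hsymm
  have close_of_dist (r ε : ℝ) (hr : 0 < r) (hε : 0 < ε) :
      ∃ ε' > 0, ∀ x y : X, dist x y < ε' → d r x y < ENNReal.ofReal ε :=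
    Metric.mem_uniformity_dist.1 (hI ▸ h.entourageDr_mem_drUniformity hr hε)
  refine ⟨dist, fun _ _ => dist_nonneg, dist_comm, dist_triangle, fun x y => ⟨fun hxy => ?_, ?_⟩,
    close_of_dist, fun ε hε => ?_⟩
  · refine hnd x y fun r hr => ENNReal.eq_zero_of_forall_lt_ofReal fun ε hε => ?_
    obtain ⟨ε', hε', hclose⟩ := close_of_dist r ε hr hε
    exact hclose x y (hxy.trans_lt hε')
  · rintro rfl
    exact dist_self x
  · obtain ⟨n, hn⟩ := h.mem_drUniformity_iff.1 (hI ▸ Metric.dist_mem_uniformity hε)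
    exact ⟨n + 1, (1 / 2) ^ n, by positivity, by positivity, fun x y hxy => hn (a := (x, y)) hxy⟩
end

section
/- Let 𝒫 be a finite set of subsets of ℝ^d, each having nonempty interior. Then there exists λ > 0 such that for every tiling S of ℝ^d with prototile set 𝒫, every nonempty subset K ⊆ ℝ^d, and all u, v ∈ ℝ^d with |u| < λ and |v| < λ: if (S+u) ⊓ K = (S+v) ⊓ K, then u = v. (Here (S+u) ⊓ K denotes the set of tiles of S+u meeting K.) -/
open ENNReal

noncomputable section

/-!
Every prototile contains an open ball of some radius `λ` (uniform, as there are finitely many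
prototiles), hence so does every tile. If `(S + u) ⊓ K = (S + v) ⊓ K`, a tile of `S + u` meeting
`K` is also a tile of `S + v`, so two tiles of `S` differ by the translation `w = v - u`. A compact
set is not invariant under a nonzero translation, so these tiles are distinct; but if
`‖w‖ < 2λ`, the ball of radius `λ` in the interior of the one and its `w`-translate overlap,
contradicting the disjointness of interiors.
-/

open Metric Topology

section Translates

variable {E : Type*} [NormedAddCommGroup E]

theorem interior_image_add_right (x : E) (A : Set E) :
    interior ((fun p => p + x) '' A) = (fun p => p + x) '' interior A :=
  ((Homeomorph.addRight x).image_interior A).symm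

theorem IsCompact.image_add_right_ne_self [InnerProductSpace ℝ E] {A : Set E}
    (hA : IsCompact A) (hne : A.Nonempty) {w : E} (hw : w ≠ 0) :
    (fun p => p + w) '' A ≠ A := by
  intro h
  -- a maximiser `x` of `⟪w, ·⟫` on `A` cannot have `x + w ∈ A`
  have hcont : Continuous fun y => inner ℝ w y := by fun_prop
  obtain ⟨x, hx, hmax⟩ := hA.exists_isMaxOn hne hcont.continuousOn
  have hle : inner ℝ w (x + w) ≤ inner ℝ w x := hmax (h ▸ ⟨x, hx, rfl⟩ : x + w ∈ A)
  rw [inner_add_right] at hle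
  linarith [real_inner_self_pos.mpr hw]

theorem interior_image_add_right_inter_nonempty [NormedSpace ℝ E] {A : Set E} {c w : E} {r : ℝ}
    (hball : ball c r ⊆ interior A) (hw : ‖w‖ < 2 * r) :
    (interior ((fun p => p + w) '' A) ∩ interior A).Nonempty := by
  have hhalf : ‖(2 : ℝ)⁻¹ • w‖ < r := by
    rw [norm_smul, Real.norm_of_nonneg (by norm_num)]
    linarith
  refine ⟨c + (2 : ℝ)⁻¹ • w, ?_, hball (by simpa [dist_eq_norm] using hhalf)⟩
  rw [interior_image_add_right]
  exact ⟨c - (2 : ℝ)⁻¹ • w, hball (by simpa [dist_eq_norm] using hhalf), by module⟩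

theorem ball_subset_interior_image_add_right {A : Set E} {c : E} {r : ℝ}
    (hball : ball c r ⊆ interior A) (x : E) :
    ball (c + x) r ⊆ interior ((fun p => p + x) '' A) := by
  have himage : (fun p => p + x) '' ball c r = ball (c + x) r :=
    (IsometryEquiv.addRight x).image_ball c r
  rw [interior_image_add_right, ← himage]
  exact Set.image_mono hball

theorem Set.Finite.exists_pos_forall_ball_subset_interior {P : Set (Set E)} (hP : P.Finite)
    (hPint : ∀ τ ∈ P, (interior τ).Nonempty) :
    ∃ r : ℝ, 0 < r ∧ ∀ τ ∈ P, ∃ c, ball c r ⊆ interior τ := by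
  have hsmall : ∀ τ ∈ P, ∀ᶠ r in 𝓝[>] (0 : ℝ), ∃ c, ball c r ⊆ interior τ := by
    intro τ hτ
    obtain ⟨c, hc⟩ := hPint τ hτ
    obtain ⟨R, hR, hsub⟩ := Metric.isOpen_iff.mp isOpen_interior c hc
    filter_upwards [nhdsWithin_le_nhds (Iio_mem_nhds hR)] with r hr
    exact ⟨c, (ball_subset_ball hr.le).trans hsub⟩
  exact ((hP.eventually_all.mpr hsmall).and self_mem_nhdsWithin).exists.imp
    fun r hr => ⟨hr.2, hr.1⟩

end Translates

section Tiling

variable {d : ℕ} {P S : Set (Set (EuclideanSpace ℝ (Fin d)))}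

theorem IsTiling.isCompact (hS : IsTiling P S) {t : Set (EuclideanSpace ℝ (Fin d))}
    (ht : t ∈ S) : IsCompact t := by
  obtain ⟨e⟩ := hS.2.1 t ht
  have : CompactSpace (closedBall (0 : EuclideanSpace ℝ (Fin d)) 1) :=
    isCompact_iff_compactSpace.mp (isCompact_closedBall 0 1)
  exact isCompact_iff_compactSpace.mpr e.symm.compactSpace

theorem IsTiling.nonempty (hS : IsTiling P S) {t : Set (EuclideanSpace ℝ (Fin d))}
    (ht : t ∈ S) : t.Nonempty := by
  obtain ⟨e⟩ := hS.2.1 t ht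
  exact ⟨e.symm ⟨0, mem_closedBall_self zero_le_one⟩, Subtype.property _⟩

theorem exists_eq_image_add_of_meetsTiles_eq (hS : ⋃₀ S = Set.univ)
    {K : Set (EuclideanSpace ℝ (Fin d))} (hK : K.Nonempty) {u v : EuclideanSpace ℝ (Fin d)}
    (h : meetsTiles (transTiling S u) K = meetsTiles (transTiling S v) K) :
    ∃ s₁ ∈ S, ∃ s₂ ∈ S, s₁ = (fun p => p + (v - u)) '' s₂ := by
  obtain ⟨k, hk⟩ := hK
  obtain ⟨s₁, hs₁, hks₁⟩ : k - u ∈ ⋃₀ S := hS ▸ Set.mem_univ _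
  have hmeets : (fun p => p + u) '' s₁ ∈ meetsTiles (transTiling S u) K :=
    ⟨⟨s₁, hs₁, rfl⟩, k, ⟨k - u, hks₁, sub_add_cancel k u⟩, hk⟩
  rw [h] at hmeets
  obtain ⟨⟨s₂, hs₂, hs₁₂⟩, -⟩ := hmeets
  refine ⟨s₁, hs₁, s₂, hs₂, (add_left_injective u).image_injective ?_⟩
  simp_rw [Set.image_image, add_assoc, sub_add_cancel]
  exact hs₁₂.symm

theorem IsTiling.eq_zero_of_image_add_mem (hS : IsTiling P S) {r : ℝ}
    (hball : ∀ τ ∈ P, ∃ c, ball c r ⊆ interior τ) {s : Set (EuclideanSpace ℝ (Fin d))}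
    {w : EuclideanSpace ℝ (Fin d)} (hs : s ∈ S) (hsw : (fun p => p + w) '' s ∈ S)
    (hw : ‖w‖ < 2 * r) : w = 0 := by
  by_contra hw₀
  have hne : (fun p => p + w) '' s ≠ s :=
    (hS.isCompact hs).image_add_right_ne_self (hS.nonempty hs) hw₀
  obtain ⟨τ, hτ, x, rfl⟩ := hS.1 s hs
  obtain ⟨c, hc⟩ := hball τ hτ
  have hmeet :=
    interior_image_add_right_inter_nonempty (ball_subset_interior_image_add_right hc x) hw
  rw [hS.2.2.2 _ hsw _ hs hne] at hmeet
  exact Set.not_nonempty_empty hmeet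

end Tiling

theorem stmt_16_general {d : ℕ} (P : Set (Set (EuclideanSpace ℝ (Fin d))))
    (hP : P.Finite) (hPint : ∀ τ ∈ P, (interior τ).Nonempty) :
    ∃ lam : ℝ, 0 < lam ∧
      ∀ S : Set (Set (EuclideanSpace ℝ (Fin d))), IsTiling P S →
        ∀ K : Set (EuclideanSpace ℝ (Fin d)), K.Nonempty →
          ∀ u v : EuclideanSpace ℝ (Fin d), ‖u‖ < lam → ‖v‖ < lam →
            meetsTiles (transTiling S u) K = meetsTiles (transTiling S v) K → u = v := by
  obtain ⟨lam, hlam, hball⟩ := hP.exists_pos_forall_ball_subset_interior hPint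
  refine ⟨lam, hlam, fun S hS K hK u v hu hv h => ?_⟩
  obtain ⟨s₁, hs₁, s₂, hs₂, rfl⟩ := exists_eq_image_add_of_meetsTiles_eq hS.2.2.1 hK h
  have hvu : ‖v - u‖ < 2 * lam := by linarith [norm_sub_le v u]
  exact (sub_eq_zero.mp (hS.eq_zero_of_image_add_mem hball hs₂ hs₁ hvu)).symm

theorem stmt_16 {d : ℕ} (hd : 1 ≤ d) (P : Set (Set (EuclideanSpace ℝ (Fin d))))
    (hP : P.Finite) (hPint : ∀ τ ∈ P, (interior τ).Nonempty) :
    ∃ lam : ℝ, 0 < lam ∧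
      ∀ S : Set (Set (EuclideanSpace ℝ (Fin d))), IsTiling P S →
        ∀ K : Set (EuclideanSpace ℝ (Fin d)), K.Nonempty →
          ∀ u v : EuclideanSpace ℝ (Fin d), ‖u‖ < lam → ‖v‖ < lam →
            meetsTiles (transTiling S u) K = meetsTiles (transTiling S v) K → u = v :=
  stmt_16_general P hP hPint
end
end

section
/- Let (X, {d_r}) satisfy the weak d_r-axioms, and equip X with the topology generated by the basis {N_{r,ε}(x) | x ∈ X, r > 0, ε > 0}. Let U ⊆ ℝ^n be open and p : U → X a map such that for every t₀ ∈ U and every r > 0, the function t ↦ d_r(p(t₀), p(t)), with values in [0,∞], is continuous at t₀. Then p is continuous. -/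
open ENNReal

theorem stmt_18 {X : Type*} (d : ℝ → X → X → ℝ≥0∞) (h : WeakDr d)
    {n : ℕ} {U : Set (Fin n → ℝ)} (hU : IsOpen U) (p : U → X)
    (hp : ∀ (t₀ : U) (r : ℝ), 0 < r →
      ContinuousAt (fun t : U => d r (p t₀) (p t)) t₀) :
    @Continuous U X _ (TopologicalSpace.generateFrom (drBasis d)) p := by
  rw [continuous_generateFrom_iff]
  rintro s ⟨x, r, ε, hr, hε, rfl⟩
  rw [isOpen_iff_mem_nhds]
  intro t₀ ht₀
  have ha : d r x (p t₀) < ENNReal.ofReal ε := ht₀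
  -- use right upper semicontinuity to fatten r
  obtain ⟨δ, hδ, hδlt⟩ := h.usc x (p t₀) r ε hr hε ha
  set a := d (r + δ) x (p t₀) with ha_def
  have hane : a ≠ ⊤ := hδlt.ne_top
  have hato : a.toReal < ε := by
    have := (ENNReal.lt_ofReal_iff_toReal_lt hane).mp hδlt
    exact this
  set b : ℝ := (ε - a.toReal) / 2 with hb_def
  have hb : 0 < b := by rw [hb_def]; linarith
  set ε' : ℝ := min δ b with hε'_def
  have hε' : 0 < ε' := lt_min hδ hb
  -- the set where d_{r+δ+ε}(p t₀, p t) < ε' is a neighborhood of t₀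
  have hrδε : 0 < r + δ + ε := by linarith
  have hc := hp t₀ (r + δ + ε) hrδε
  have h0 : d (r + δ + ε) (p t₀) (p t₀) = 0 := h.self _ _ hrδε
  have hmem : {t : U | d (r + δ + ε) (p t₀) (p t) < ENNReal.ofReal ε'} ∈ nhds t₀ := by
    have : (fun t : U => d (r + δ + ε) (p t₀) (p t)) ⁻¹' (Set.Iio (ENNReal.ofReal ε')) ∈
        nhds t₀ := by
      apply hc.preimage_mem_nhds
      refine IsOpen.mem_nhds isOpen_Iio ?_
      simp only [Set.mem_Iio, h0]
      exact ENNReal.ofReal_pos.mpr hε'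
    exact this
  refine Filter.mem_of_superset hmem ?_
  intro t ht
  have ht' : d (r + δ + ε) (p t₀) (p t) < ENNReal.ofReal ε' := ht
  have htδ : d (r + δ + ε) (p t₀) (p t) < ENNReal.ofReal δ :=
    ht'.trans_le (ENNReal.ofReal_le_ofReal (min_le_left _ _))
  have htb : d (r + δ + ε) (p t₀) (p t) < ENNReal.ofReal b :=
    ht'.trans_le (ENNReal.ofReal_le_ofReal (min_le_right _ _))
  have tri := h.weak_tri x (p t₀) (p t) r δ ε hr hδ hε hδlt htδ
  show d r x (p t) < ENNReal.ofReal ε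
  calc d r x (p t) ≤ a + d (r + δ + ε) (p t₀) (p t) := tri
    _ < a + ENNReal.ofReal b := by
        exact ENNReal.add_lt_add_left hane htb
    _ ≤ ENNReal.ofReal a.toReal + ENNReal.ofReal b := by
        rw [ENNReal.ofReal_toReal hane]
    _ = ENNReal.ofReal (a.toReal + b) := by
        rw [ENNReal.ofReal_add ENNReal.toReal_nonneg hb.le]
    _ < ENNReal.ofReal ε := by
        apply ENNReal.ofReal_lt_ofReal_iff hε |>.mpr
        simp only [hb_def]
        linarith
end
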